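/- arXiv:2205.03243 — 3 statements merged into one kernel-verified Lean document; each statement's English description precedes it below -/
import Mathlib

section
/- Let S be a deterministic Streett automaton with k Streett pairs and let A(S) be the alternating Büchi automaton constructed from S. If the run of S on an ω-word w satisfies the Streett acceptance condition of S, then there exists an accepting run tree of A(S) on w (i.e., w ∈ L(A(S))). -/
open scoped ENNReal

set_option maxHeartbeats 1000000

namespace GFM

/-- The set of elements occurring infinitely often in a sequence. -/
def InfOcc {Q : Type*} (ρ : ℕ → Q) : Set Q := {q | ∀ n : ℕ, ∃ m : ℕ, n ≤ m ∧ ρ m = q}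

/-! ### Deterministic Streett automata -/

/-- A deterministic Streett automaton with `k` Streett pairs over alphabet `Alph`. -/
structure DSA (Alph : Type) (k : ℕ) where
  Q : Type
  [finQ : Fintype Q]
  [decQ : DecidableEq Q]
  init : Q
  next : Q → Alph → Q
  G : Fin k → Set Q
  R : Fin k → Set Q
  disjGR : ∀ i, G i ∩ R i = ∅

attribute [instance] DSA.finQ DSA.decQ

variable {Alph : Type} {k : ℕ}

/-- The (unique) run of a deterministic Streett automaton on an ω-word. -/
def DSA.run (S : DSA Alph k) (w : ℕ → Alph) : ℕ → S.Q
  | 0 => S.init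
  | n + 1 => S.next (DSA.run S w n) (w n)

/-- Streett acceptance: for every pair, finitely many red states or infinitely many
green states. -/
def DSA.Accepts (S : DSA Alph k) (w : ℕ → Alph) : Prop :=
  ∀ i : Fin k, InfOcc (S.run w) ∩ S.R i = ∅ ∨ (InfOcc (S.run w) ∩ S.G i).Nonempty

def DSA.Lang (S : DSA Alph k) : Set (ℕ → Alph) := {w | S.Accepts w}

/-! ### Deterministic Rabin automata -/

structure DRA (Alph : Type) (k : ℕ) where
  Q : Type
  [finQ : Fintype Q]
  [decQ : DecidableEq Q]
  init : Q
  next : Q → Alph → Q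
  R : Fin k → Set Q
  G : Fin k → Set Q

attribute [instance] DRA.finQ DRA.decQ

def DRA.run (D : DRA Alph k) (w : ℕ → Alph) : ℕ → D.Q
  | 0 => D.init
  | n + 1 => D.next (DRA.run D w n) (w n)

/-- Rabin acceptance: some pair has finitely many red states and infinitely many
green states. -/
def DRA.Accepts (D : DRA Alph k) (w : ℕ → Alph) : Prop :=
  ∃ i : Fin k, InfOcc (D.run w) ∩ D.R i = ∅ ∧ (InfOcc (D.run w) ∩ D.G i).Nonempty

def DRA.Lang (D : DRA Alph k) : Set (ℕ → Alph) := {w | D.Accepts w}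

/-! ### Nondeterministic Büchi automata (state-based acceptance) -/

structure NBA (Alph : Type) where
  Q : Type
  [finQ : Fintype Q]
  [decQ : DecidableEq Q]
  init : Q
  next : Q → Alph → Set Q
  F : Set Q

attribute [instance] NBA.finQ NBA.decQ

def NBA.IsRun (B : NBA Alph) (w : ℕ → Alph) (ρ : ℕ → B.Q) : Prop :=
  ρ 0 = B.init ∧ ∀ i : ℕ, ρ (i + 1) ∈ B.next (ρ i) (w i)

def NBA.Accepts (B : NBA Alph) (w : ℕ → Alph) : Prop :=
  ∃ ρ : ℕ → B.Q, B.IsRun w ρ ∧ (InfOcc ρ ∩ B.F).Nonempty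

def NBA.Lang (B : NBA Alph) : Set (ℕ → Alph) := {w | B.Accepts w}

/-! ### Nondeterministic Büchi automata with transition-based acceptance -/

structure NBAt (Alph : Type) where
  Q : Type
  [finQ : Fintype Q]
  [decQ : DecidableEq Q]
  init : Q
  next : Q → Alph → Set Q
  F : Set (Q × Alph × Q)

attribute [instance] NBAt.finQ NBAt.decQ

def NBAt.IsRun (B : NBAt Alph) (w : ℕ → Alph) (ρ : ℕ → B.Q) : Prop :=
  ρ 0 = B.init ∧ ∀ i : ℕ, ρ (i + 1) ∈ B.next (ρ i) (w i)

def NBAt.Accepts (B : NBAt Alph) (w : ℕ → Alph) : Prop :=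
  ∃ ρ : ℕ → B.Q, B.IsRun w ρ ∧ {i : ℕ | (ρ i, w i, ρ (i + 1)) ∈ B.F}.Infinite

/-! ### Alternating Büchi automata -/

/-- An alternating Büchi automaton with transition-based acceptance.  The
(disjoint) sets of nondeterministic and universal states are realized as the two
summands of a sum type. -/
structure ABA (Alph : Type) where
  Qn : Type
  Qu : Type
  [finQn : Fintype Qn]
  [finQu : Fintype Qu]
  [decQn : DecidableEq Qn]
  [decQu : DecidableEq Qu]
  init : Qn ⊕ Qu
  next : (Qn ⊕ Qu) → Alph → Set (Qn ⊕ Qu)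
  F : Set ((Qn ⊕ Qu) × Alph × (Qn ⊕ Qu))

attribute [instance] ABA.finQn ABA.finQu ABA.decQn ABA.decQu

abbrev ABA.State (A : ABA Alph) : Type := A.Qn ⊕ A.Qu

def ABA.IsRun (A : ABA Alph) (w : ℕ → Alph) (ρ : ℕ → A.State) : Prop :=
  ρ 0 = A.init ∧ ∀ i : ℕ, ρ (i + 1) ∈ A.next (ρ i) (w i)

def ABA.RunAccepting (A : ABA Alph) (w : ℕ → Alph) (ρ : ℕ → A.State) : Prop :=
  {i : ℕ | (ρ i, w i, ρ (i + 1)) ∈ A.F}.Infinite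

/-- A run tree of an alternating automaton: a nonempty family of runs closed under
all successor choices at universal states. -/
def ABA.IsRunTree (A : ABA Alph) (w : ℕ → Alph) {J : Type} (ρ : J → ℕ → A.State) : Prop :=
  Nonempty J ∧ (∀ j, A.IsRun w (ρ j)) ∧
    ∀ (j : J) (i : ℕ), (ρ j i).isRight →
      ∀ q' ∈ A.next (ρ j i) (w i),
        ∃ j' : J, (∀ l ≤ i, ρ j' l = ρ j l) ∧ ρ j' (i + 1) = q'

/-- An alternating automaton accepts a word iff it has an accepting run tree on it. -/
def ABA.Accepts (A : ABA Alph) (w : ℕ → Alph) : Prop :=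
  ∃ (J : Type) (ρ : J → ℕ → A.State), A.IsRunTree w ρ ∧ ∀ j, A.RunAccepting w (ρ j)

/-! ### The alternating GFM Büchi automaton constructed from a DSA

Copies `0, …, k` are encoded by `Option (Fin k)`: `none` is the `0`-copy and
`some i` is the copy for the `i`-th Streett pair. -/

abbrev Copy (k : ℕ) : Type := Option (Fin k)

/-- `I_q = {0} ∪ { i | q ∈ R_i }`. -/
def DSA.Iset (S : DSA Alph k) (q : S.Q) : Set (Copy k) :=
  {c | c = none ∨ ∃ i : Fin k, c = some i ∧ q ∈ S.R i}

def DSA.altNext (S : DSA Alph k) :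
    (S.Q ⊕ (S.Q × Copy k)) → Alph → Set (S.Q ⊕ (S.Q × Copy k))
  | Sum.inl q, a => {Sum.inl (S.next q a), Sum.inr (S.next q a, none)}
  | Sum.inr (q, c), a =>
      {x | ∃ c' : Copy k, x = Sum.inr (S.next q a, c') ∧ c' ∈ S.Iset (S.next q a) ∧
            ¬ ∃ i : Fin k, c = some i ∧ S.next q a ∈ S.G i ∧ c' = c}

def DSA.altF (S : DSA Alph k) :
    Set ((S.Q ⊕ (S.Q × Copy k)) × Alph × (S.Q ⊕ (S.Q × Copy k))) :=
  {t | ∃ q c a q' c', t = (Sum.inr (q, c), a, Sum.inr (q', c')) ∧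
        (c ≠ c' ∨ (c = none ∧ c' = none))}

/-- The alternating Büchi automaton `A(S)` constructed from the DSA `S`. -/
def DSA.alt (S : DSA Alph k) : ABA Alph where
  Qn := S.Q
  Qu := S.Q × Copy k
  init := Sum.inl S.init
  next := S.altNext
  F := S.altF

/-- The set of states of `A(S)`. -/
abbrev AltState (S : DSA Alph k) : Type := S.Q ⊕ (S.Q × Copy k)

/-! ### The GFM NBA constructed from a DRA -/

/-- The nondeterministic Büchi automaton `B(R)` constructed from a DRA.
`none` is the rejecting sink `⊥`; `some (q, none)` is state `q` in the `0`-copy and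
`some (q, some i)` is state `q` in the copy of the `i`-th Rabin pair. -/
def DRA.toNBA (D : DRA Alph k) : NBA Alph where
  Q := Option (D.Q × Copy k)
  init := some (D.init, none)
  next := fun x a =>
    match x with
    | none => {none}
    | some (q, none) => {y | ∃ c : Copy k, y = some (D.next q a, c)}
    | some (q, some i) =>
        {y | (q ∈ D.R i ∧ y = none) ∨ (q ∉ D.R i ∧ y = some (D.next q a, some i))}
  F := {y | ∃ q i, y = some (q, some i) ∧ q ∈ D.G i}

/-! ### Finite MDPs, strategies and the induced probability measures -/

/-- A finite MDP with atomic-proposition labels in `Alph`. -/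
structure FinMDP (Alph : Type) where
  S : Type
  [finS : Fintype S]
  [decS : DecidableEq S]
  init : S
  Act : Type
  [finAct : Fintype Act]
  [decAct : DecidableEq Act]
  enabled : S → Finset Act
  enabled_nonempty : ∀ s, (enabled s).Nonempty
  T : S → Act → S → ℝ≥0∞
  T_sum : ∀ s, ∀ a ∈ enabled s, (∑ s' : S, T s a s') = 1
  label : S → Alph

attribute [instance] FinMDP.finS FinMDP.decS FinMDP.finAct FinMDP.decAct

/-- The product σ-algebra on trajectories, each coordinate carrying the discrete
(⊤) σ-algebra. -/
def trajMS (X : Type) : MeasurableSpace (ℕ → X) :=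
  @MeasurableSpace.pi ℕ (fun _ => X) (fun _ => ⊤)

/-- A (history-dependent, randomized) strategy of a finite MDP: it maps the past
run and the current state to a distribution over actions. -/
def MStrat (M : FinMDP Alph) : Type :=
  List (M.S × M.Act) → M.S → M.Act → ℝ≥0∞

def MStratValid (M : FinMDP Alph) (σ : MStrat M) : Prop :=
  ∀ h s, (∑ a ∈ M.enabled s, σ h s a) = 1 ∧ ∀ a ∉ M.enabled s, σ h s a = 0

/-- The probability that a run of the MDP starting in `s0`, controlled by `σ`,
starts with the state-action prefix `r 0, …, r n`. -/
noncomputable def mdpPrefixProb (M : FinMDP Alph) (σ : MStrat M) (s0 : M.S)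
    (r : ℕ → M.S × M.Act) : ℕ → ℝ≥0∞
  | 0 => (if (r 0).1 = s0 then 1 else 0) * σ [] (r 0).1 (r 0).2
  | n + 1 =>
      mdpPrefixProb M σ s0 r n * M.T (r n).1 (r n).2 (r (n + 1)).1 *
        σ ((List.range (n + 1)).map r) (r (n + 1)).1 (r (n + 1)).2

/-- `μ` is the measure on infinite runs induced (via Ionescu–Tulcea) by the
strategy `σ` from initial state `s0`: it is the unique probability measure giving
every cylinder its prefix probability. -/
def IsMDPRunMeasure (M : FinMDP Alph) (σ : MStrat M) (s0 : M.S)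
    (μ : @MeasureTheory.Measure (ℕ → M.S × M.Act) (trajMS (M.S × M.Act))) : Prop :=
  μ Set.univ = 1 ∧
    ∀ (r : ℕ → M.S × M.Act) (n : ℕ),
      μ {r' | ∀ i ≤ n, r' i = r i} = mdpPrefixProb M σ s0 r n

/-- The probability of the event `E` under strategy `σ` from state `s0`. -/
noncomputable def mdpEventProbFrom (M : FinMDP Alph) (σ : MStrat M) (s0 : M.S)
    (E : Set (ℕ → M.S × M.Act)) : ℝ≥0∞ :=
  ⨆ (μ : @MeasureTheory.Measure (ℕ → M.S × M.Act) (trajMS (M.S × M.Act)))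
    (_ : IsMDPRunMeasure M σ s0 μ), μ E

/-- Optimal probability that the label sequence of a run of `M` started in `s0`
belongs to the ω-language `L'`. -/
noncomputable def PSemSatFrom (M : FinMDP Alph) (s0 : M.S) (L' : Set (ℕ → Alph)) : ℝ≥0∞ :=
  ⨆ (σ : MStrat M) (_ : MStratValid M σ),
    mdpEventProbFrom M σ s0 {r | (fun n => M.label (r n).1) ∈ L'}

/-- The semantic satisfaction probability `PSemSat^M_{L'}`. -/
noncomputable def PSemSat (M : FinMDP Alph) (L' : Set (ℕ → Alph)) : ℝ≥0∞ :=
  PSemSatFrom M M.init L'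

/-! ### The product of an MDP with a deterministic Streett automaton

Since the automaton is deterministic, its component in the product is the unique
run of the automaton on the label sequence, and strategies of the product MDP
correspond exactly to strategies of `M`. -/

/-- The value of the Streett MDP `M × S` started in `(s0, q₀)`: the optimal
probability that the automaton component of the run satisfies the Streett
condition. -/
noncomputable def streettProdValFrom (M : FinMDP Alph) (S : DSA Alph k) (s0 : M.S) : ℝ≥0∞ :=
  ⨆ (σ : MStrat M) (_ : MStratValid M σ),
    mdpEventProbFrom M σ s0
      {r | ∀ i : Fin k,
        InfOcc (S.run fun n => M.label (r n).1) ∩ S.R i = ∅ ∨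
        (InfOcc (S.run fun n => M.label (r n).1) ∩ S.G i).Nonempty}

/-- The value `val(M × S)` of the Streett MDP from the initial state. -/
noncomputable def streettProdVal (M : FinMDP Alph) (S : DSA Alph k) : ℝ≥0∞ :=
  streettProdValFrom M S M.init

/-! ### The stochastic Büchi game `M × A(S)`

A play is in a position `(s, x)` with `s` a state of `M` and `x` a state of
`A(S)`.  In every step the acceptance player chooses (jointly, possibly
randomized) an action `a` enabled in `s` together with a successor automaton
state (which is used when `x` is a nondeterministic state); if `x` is a
universal state, the rejection player chooses the successor automaton state.
The next position is `(s', x')` with `s'` sampled from `T(s, a)`.  A play is won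
by the acceptance player iff infinitely many of the automaton transitions taken
are final. -/

abbrev GChoice (M : FinMDP Alph) (S : DSA Alph k) : Type := M.Act × AltState S
abbrev GPos (M : FinMDP Alph) (S : DSA Alph k) : Type := M.S × AltState S
abbrev GHist (M : FinMDP Alph) (S : DSA Alph k) : Type := List (GPos M S × GChoice M S)

/-- A strategy of the acceptance player. -/
def AccStrat (M : FinMDP Alph) (S : DSA Alph k) : Type :=
  GHist M S → GPos M S → GChoice M S → ℝ≥0∞

def AccStratValid (M : FinMDP Alph) (S : DSA Alph k) (σ : AccStrat M S) : Prop :=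
  ∀ h p, (∑ c : GChoice M S, σ h p c) = 1 ∧
    (∀ c : GChoice M S, c.1 ∉ M.enabled p.1 → σ h p c = 0) ∧
    (∀ c : GChoice M S, p.2.isLeft → c.2 ∉ S.altNext p.2 (M.label p.1) → σ h p c = 0)

/-- A strategy of the rejection player (only used at universal states). -/
def RejStrat (M : FinMDP Alph) (S : DSA Alph k) : Type :=
  GHist M S → GPos M S → AltState S → ℝ≥0∞

def RejStratValid (M : FinMDP Alph) (S : DSA Alph k) (π : RejStrat M S) : Prop :=
  ∀ h p, p.2.isRight →
    (∑ x : AltState S, π h p x) = 1 ∧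
    ∀ x : AltState S, x ∉ S.altNext p.2 (M.label p.1) → π h p x = 0

/-- Probability of a finite play prefix in the game `M × A(S)` started at
`(s0, x0)` under the strategy pair `(σ, π)`. -/
noncomputable def gamePrefixProb (M : FinMDP Alph) (S : DSA Alph k)
    (σ : AccStrat M S) (π : RejStrat M S) (s0 : M.S) (x0 : AltState S)
    (r : ℕ → GPos M S × GChoice M S) : ℕ → ℝ≥0∞
  | 0 => (if (r 0).1 = (s0, x0) then 1 else 0) * σ [] (r 0).1 (r 0).2
  | n + 1 =>
      gamePrefixProb M S σ π s0 x0 r n *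
      M.T (r n).1.1 (r n).2.1 (r (n + 1)).1.1 *
      (if (r n).1.2.isLeft then (if (r n).2.2 = (r (n + 1)).1.2 then 1 else 0)
       else π ((List.range n).map r) (r n).1 ((r (n + 1)).1.2)) *
      σ ((List.range (n + 1)).map r) (r (n + 1)).1 (r (n + 1)).2

/-- `μ` is the measure on plays induced (via Ionescu–Tulcea) by the strategy
pair `(σ, π)` from `(s0, x0)`. -/
def IsGameRunMeasure (M : FinMDP Alph) (S : DSA Alph k)
    (σ : AccStrat M S) (π : RejStrat M S) (s0 : M.S) (x0 : AltState S)
    (μ : @MeasureTheory.Measure (ℕ → GPos M S × GChoice M S)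
      (trajMS (GPos M S × GChoice M S))) : Prop :=
  μ Set.univ = 1 ∧
    ∀ (r : ℕ → GPos M S × GChoice M S) (n : ℕ),
      μ {r' | ∀ i ≤ n, r' i = r i} = gamePrefixProb M S σ π s0 x0 r n

/-- The plays won by the acceptance player: infinitely many final transitions of
`A(S)` are taken. -/
def gameWinSet (M : FinMDP Alph) (S : DSA Alph k) : Set (ℕ → GPos M S × GChoice M S) :=
  {r | {i : ℕ | ((r i).1.2, M.label (r i).1.1, (r (i + 1)).1.2) ∈ S.altF}.Infinite}

/-- The value of the stochastic Büchi game `M × A(S)` from position `(s0, x0)`. -/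
noncomputable def gameValFrom (M : FinMDP Alph) (S : DSA Alph k)
    (s0 : M.S) (x0 : AltState S) : ℝ≥0∞ :=
  ⨆ (σ : AccStrat M S) (_ : AccStratValid M S σ),
    ⨅ (π : RejStrat M S) (_ : RejStratValid M S π),
      ⨆ (μ : @MeasureTheory.Measure (ℕ → GPos M S × GChoice M S)
          (trajMS (GPos M S × GChoice M S)))
        (_ : IsGameRunMeasure M S σ π s0 x0 μ),
        μ (gameWinSet M S)

/-- The value `val(M × A(S))` of the stochastic Büchi game from `(s₀, q₀)`. -/
noncomputable def gameVal (M : FinMDP Alph) (S : DSA Alph k) : ℝ≥0∞ :=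
  gameValFrom M S M.init (Sum.inl S.init)

/-! ### The product of an MDP with a nondeterministic Büchi automaton

In the product `M × B` the strategy chooses, at each step, an enabled action of
`M` together with a successor state of `B` (jointly, possibly randomized). -/

abbrev PPos (M : FinMDP Alph) (B : NBA Alph) : Type := M.S × B.Q
abbrev PChoice (M : FinMDP Alph) (B : NBA Alph) : Type := M.Act × B.Q

def ProdStrat (M : FinMDP Alph) (B : NBA Alph) : Type :=
  List (PPos M B × PChoice M B) → PPos M B → PChoice M B → ℝ≥0∞

def ProdStratValid (M : FinMDP Alph) (B : NBA Alph) (σ : ProdStrat M B) : Prop :=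
  ∀ h p, (∑ c : PChoice M B, σ h p c) = 1 ∧
    (∀ c : PChoice M B, c.1 ∉ M.enabled p.1 → σ h p c = 0) ∧
    (∀ c : PChoice M B, c.2 ∉ B.next p.2 (M.label p.1) → σ h p c = 0)

noncomputable def prodPrefixProb (M : FinMDP Alph) (B : NBA Alph)
    (σ : ProdStrat M B) (s0 : M.S) (r : ℕ → PPos M B × PChoice M B) : ℕ → ℝ≥0∞
  | 0 => (if (r 0).1 = (s0, B.init) then 1 else 0) * σ [] (r 0).1 (r 0).2
  | n + 1 =>
      prodPrefixProb M B σ s0 r n *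
      M.T (r n).1.1 (r n).2.1 (r (n + 1)).1.1 *
      (if (r n).2.2 = (r (n + 1)).1.2 then 1 else 0) *
      σ ((List.range (n + 1)).map r) (r (n + 1)).1 (r (n + 1)).2

def IsProdRunMeasure (M : FinMDP Alph) (B : NBA Alph) (σ : ProdStrat M B) (s0 : M.S)
    (μ : @MeasureTheory.Measure (ℕ → PPos M B × PChoice M B)
      (trajMS (PPos M B × PChoice M B))) : Prop :=
  μ Set.univ = 1 ∧
    ∀ (r : ℕ → PPos M B × PChoice M B) (n : ℕ),
      μ {r' | ∀ i ≤ n, r' i = r i} = prodPrefixProb M B σ s0 r n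

noncomputable def prodEventProb (M : FinMDP Alph) (B : NBA Alph) (σ : ProdStrat M B)
    (s0 : M.S) (E : Set (ℕ → PPos M B × PChoice M B)) : ℝ≥0∞ :=
  ⨆ (μ : @MeasureTheory.Measure (ℕ → PPos M B × PChoice M B)
      (trajMS (PPos M B × PChoice M B)))
    (_ : IsProdRunMeasure M B σ s0 μ), μ E

/-- The Büchi objective of the product: the automaton component visits `F`
infinitely often. -/
def prodBuchiSet (M : FinMDP Alph) (B : NBA Alph) : Set (ℕ → PPos M B × PChoice M B) :=
  {r | (InfOcc (fun n => (r n).1.2) ∩ B.F).Nonempty}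

noncomputable def prodBuchiProb (M : FinMDP Alph) (B : NBA Alph) (σ : ProdStrat M B)
    (s0 : M.S) : ℝ≥0∞ :=
  prodEventProb M B σ s0 (prodBuchiSet M B)

/-- The optimal probability of the Büchi objective in `M × B`, started at
`(s0, q₀)`. -/
noncomputable def prodBuchiValFrom (M : FinMDP Alph) (B : NBA Alph) (s0 : M.S) : ℝ≥0∞ :=
  ⨆ (σ : ProdStrat M B) (_ : ProdStratValid M B σ), prodBuchiProb M B σ s0

/-- Probability, under a product strategy, that the label sequence of the run
lies in `L(B)`. -/
noncomputable def prodLangProb (M : FinMDP Alph) (B : NBA Alph) (σ : ProdStrat M B)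
    (s0 : M.S) : ℝ≥0∞ :=
  prodEventProb M B σ s0 {r | (fun n => M.label (r n).1.1) ∈ B.Lang}

/-- A nondeterministic Büchi automaton is good-for-MDPs iff, for every finite
MDP, the optimal Büchi probability in the product equals the semantic
satisfaction probability of its language. -/
def NBA.GFM (B : NBA Alph) : Prop :=
  ∀ M : FinMDP Alph, prodBuchiValFrom M B M.init = PSemSat M B.Lang

/-! ### The augmented MDP `M^ζ`

The augmented MDP is obtained from `M × B` by adding a fresh absorbing sink `t`
(the `Sum.inr` state); every accepting transition (i.e. one whose target
automaton state lies in `F`) leads to the sink with probability `1 − ζ`, and its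
original destinations keep probability multiplied by `ζ`. -/

abbrev AugPos (M : FinMDP Alph) (B : NBA Alph) : Type := (M.S × B.Q) ⊕ Unit

def AugStrat (M : FinMDP Alph) (B : NBA Alph) : Type :=
  List (AugPos M B × PChoice M B) → AugPos M B → PChoice M B → ℝ≥0∞

def AugStratValid (M : FinMDP Alph) (B : NBA Alph) (σ : AugStrat M B) : Prop :=
  ∀ h p, (∑ c : PChoice M B, σ h p c) = 1 ∧
    ∀ s q, p = Sum.inl (s, q) →
      ∀ c : PChoice M B,
        (c.1 ∉ M.enabled s ∨ c.2 ∉ B.next q (M.label s)) → σ h p c = 0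

open Classical in
/-- One-step transition probabilities of the augmented MDP `M^ζ`. -/
noncomputable def augStep (M : FinMDP Alph) (B : NBA Alph) (ζ : ℝ≥0∞)
    (p : AugPos M B) (c : PChoice M B) (p' : AugPos M B) : ℝ≥0∞ :=
  match p, p' with
  | Sum.inl (s, _), Sum.inl (s', q'') =>
      (if c.2 = q'' then 1 else 0) * (if c.2 ∈ B.F then ζ else 1) * M.T s c.1 s'
  | Sum.inl _, Sum.inr _ => if c.2 ∈ B.F then 1 - ζ else 0
  | Sum.inr _, Sum.inr _ => 1
  | Sum.inr _, Sum.inl _ => 0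

noncomputable def augPrefixProb (M : FinMDP Alph) (B : NBA Alph) (ζ : ℝ≥0∞)
    (σ : AugStrat M B) (s0 : M.S) (r : ℕ → AugPos M B × PChoice M B) : ℕ → ℝ≥0∞
  | 0 => (if (r 0).1 = Sum.inl (s0, B.init) then 1 else 0) * σ [] (r 0).1 (r 0).2
  | n + 1 =>
      augPrefixProb M B ζ σ s0 r n *
      augStep M B ζ (r n).1 (r n).2 (r (n + 1)).1 *
      σ ((List.range (n + 1)).map r) (r (n + 1)).1 (r (n + 1)).2

def IsAugRunMeasure (M : FinMDP Alph) (B : NBA Alph) (ζ : ℝ≥0∞) (σ : AugStrat M B)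
    (s0 : M.S)
    (μ : @MeasureTheory.Measure (ℕ → AugPos M B × PChoice M B)
      (trajMS (AugPos M B × PChoice M B))) : Prop :=
  μ Set.univ = 1 ∧
    ∀ (r : ℕ → AugPos M B × PChoice M B) (n : ℕ),
      μ {r' | ∀ i ≤ n, r' i = r i} = augPrefixProb M B ζ σ s0 r n

/-- Probability of eventually reaching the sink `t` in `M^ζ`. -/
noncomputable def augReachProb (M : FinMDP Alph) (B : NBA Alph) (ζ : ℝ≥0∞)
    (σ : AugStrat M B) (s0 : M.S) : ℝ≥0∞ :=
  ⨆ (μ : @MeasureTheory.Measure (ℕ → AugPos M B × PChoice M B)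
      (trajMS (AugPos M B × PChoice M B)))
    (_ : IsAugRunMeasure M B ζ σ s0 μ),
    μ {r | ∃ n : ℕ, (r n).1 = Sum.inr ()}

/-- The optimal probability of reaching the sink `t` in `M^ζ` from `(s0, q₀)`. -/
noncomputable def augReachVal (M : FinMDP Alph) (B : NBA Alph) (ζ : ℝ≥0∞)
    (s0 : M.S) : ℝ≥0∞ :=
  ⨆ (σ : AugStrat M B) (_ : AugStratValid M B σ), augReachProb M B ζ σ s0

/-- The strategy of `M × B` obtained from a strategy of `M^ζ` by restricting it
to the histories that avoid the sink. -/
def AugStrat.restrict (M : FinMDP Alph) (B : NBA Alph) (σ : AugStrat M B) :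
    ProdStrat M B :=
  fun h p c => σ (h.map fun z => (Sum.inl z.1, z.2)) (Sum.inl p) c

/-! ### The product of an MDP with a transition-based NBA (with blocking)

Here the automaton may block (empty successor set); blocked runs enter the
`none` component and are not accepting. -/

abbrev TPos (M : FinMDP Alph) (B : NBAt Alph) : Type := M.S × Option B.Q
abbrev TChoice (M : FinMDP Alph) (B : NBAt Alph) : Type := M.Act × Option B.Q

/-- The successor automaton states the strategy may choose in the product: a
successor from `B.next` if possible, and the blocked state `none` otherwise. -/
def NBAt.allowed (B : NBAt Alph) (ℓ : Alph) (x : Option B.Q) : Set (Option B.Q) :=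
  match x with
  | none => {none}
  | some q => {y | (B.next q ℓ = ∅ ∧ y = none) ∨ ∃ q', q' ∈ B.next q ℓ ∧ y = some q'}

def TStrat (M : FinMDP Alph) (B : NBAt Alph) : Type :=
  List (TPos M B × TChoice M B) → TPos M B → TChoice M B → ℝ≥0∞

def TStratValid (M : FinMDP Alph) (B : NBAt Alph) (σ : TStrat M B) : Prop :=
  ∀ h p, (∑ c : TChoice M B, σ h p c) = 1 ∧
    (∀ c : TChoice M B, c.1 ∉ M.enabled p.1 → σ h p c = 0) ∧
    (∀ c : TChoice M B, c.2 ∉ B.allowed (M.label p.1) p.2 → σ h p c = 0)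

noncomputable def tPrefixProb (M : FinMDP Alph) (B : NBAt Alph)
    (σ : TStrat M B) (s0 : M.S) (r : ℕ → TPos M B × TChoice M B) : ℕ → ℝ≥0∞
  | 0 => (if (r 0).1 = (s0, some B.init) then 1 else 0) * σ [] (r 0).1 (r 0).2
  | n + 1 =>
      tPrefixProb M B σ s0 r n *
      M.T (r n).1.1 (r n).2.1 (r (n + 1)).1.1 *
      (if (r n).2.2 = (r (n + 1)).1.2 then 1 else 0) *
      σ ((List.range (n + 1)).map r) (r (n + 1)).1 (r (n + 1)).2

def IsTRunMeasure (M : FinMDP Alph) (B : NBAt Alph) (σ : TStrat M B) (s0 : M.S)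
    (μ : @MeasureTheory.Measure (ℕ → TPos M B × TChoice M B)
      (trajMS (TPos M B × TChoice M B))) : Prop :=
  μ Set.univ = 1 ∧
    ∀ (r : ℕ → TPos M B × TChoice M B) (n : ℕ),
      μ {r' | ∀ i ≤ n, r' i = r i} = tPrefixProb M B σ s0 r n

/-- Runs of the product that take accepting transitions infinitely often. -/
def tAccSet (M : FinMDP Alph) (B : NBAt Alph) : Set (ℕ → TPos M B × TChoice M B) :=
  {r | {i : ℕ | ∃ q q', (r i).1.2 = some q ∧ (r (i + 1)).1.2 = some q' ∧
        (q, M.label (r i).1.1, q') ∈ B.F}.Infinite}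

/-!
The run tree consists of all runs of `A(S)` that leave the nondeterministic copy of `S` in
their first step. It is closed under universal branching because every universal state
can continue in the `0`-copy, and every run of `A(S)` projects onto the run of `S`. A branch
with only finitely many final transitions eventually stays in a single copy `i ≥ 1`; staying
there forces every later state into `R_i \ G_i`, so the run of `S` visits `R_i` infinitely
often and `G_i` only finitely often, violating the Streett condition for pair `i`.
-/

open Filter

lemma InfOcc_subset_of_eventually {Q : Type*} {ρ : ℕ → Q} {s : Set Q} {N : ℕ}
    (h : ∀ n ≥ N, ρ n ∈ s) : InfOcc ρ ⊆ s := by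
  intro q hq
  obtain ⟨m, hm, rfl⟩ := hq N
  exact h m hm

lemma InfOcc_nonempty {Q : Type*} [Finite Q] (ρ : ℕ → Q) : (InfOcc ρ).Nonempty := by
  obtain ⟨q, hq⟩ := Finite.exists_infinite_fiber ρ
  refine ⟨q, fun n => ?_⟩
  obtain ⟨m, hm, hlt⟩ := (Set.infinite_coe_iff.mp hq).exists_gt n
  exact ⟨m, hlt.le, hm⟩

lemma ABA.IsRun.splice {A : ABA Alph} {w : ℕ → Alph} {f g : ℕ → A.State}
    (hf : A.IsRun w f) {i : ℕ} (hi : g (i + 1) ∈ A.next (f i) (w i))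
    (hg : ∀ n > i, g (n + 1) ∈ A.next (g n) (w n)) :
    A.IsRun w (fun n => if n ≤ i then f n else g n) := by
  refine ⟨by simpa using hf.1, fun n => ?_⟩
  rcases lt_trichotomy n i with hn | rfl | hn
  · simpa [hn.le, Nat.succ_le_of_lt hn] using hf.2 n
  · simpa using hi
  · simpa [hn.not_ge, (Nat.lt_succ_of_lt hn).not_ge] using hg n hn

namespace DSA

lemma Accepts.not_eventually_mem_diff {S : DSA Alph k} {w : ℕ → Alph} (hacc : S.Accepts w)
    (i : Fin k) (N : ℕ) : ¬ ∀ n ≥ N, S.run w n ∈ S.R i \ S.G i := by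
  intro h
  have hsub := InfOcc_subset_of_eventually h
  rcases hacc i with hR | ⟨q, hq, hqG⟩
  · obtain ⟨q, hq⟩ := InfOcc_nonempty (S.run w)
    exact (Set.eq_empty_iff_forall_notMem.mp hR) q ⟨hq, (hsub hq).1⟩
  · exact (hsub hq).2 hqG

variable (S : DSA Alph k)

def altProj : AltState S → S.Q := Sum.elim id Prod.fst

lemma altProj_of_mem_altNext {x y : AltState S} {a : Alph} (h : y ∈ S.altNext x a) :
    S.altProj y = S.next (S.altProj x) a := by
  rcases x with q | ⟨q, c⟩
  · rcases h with rfl | rfl <;> rfl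
  · obtain ⟨c', rfl, -⟩ := h
    rfl

lemma altProj_eq_run {w : ℕ → Alph} {f : ℕ → AltState S} (hf : S.alt.IsRun w f) (n : ℕ) :
    S.altProj (f n) = S.run w n := by
  induction n with
  | zero => rw [hf.1]; rfl
  | succ n ih => rw [S.altProj_of_mem_altNext (hf.2 n), ih]; rfl

lemma inr_none_mem_altNext (q : S.Q) (c : Copy k) (a : Alph) :
    Sum.inr (S.next q a, none) ∈ S.altNext (Sum.inr (q, c)) a :=
  ⟨none, rfl, Or.inl rfl, by rintro ⟨i, rfl, -, ⟨⟩⟩⟩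

lemma mem_altF_iff {q q' : S.Q} {c c' : Copy k} {a : Alph} :
    ((Sum.inr (q, c) : AltState S), a, (Sum.inr (q', c') : AltState S)) ∈ S.altF ↔
      c ≠ c' ∨ c = none ∧ c' = none := by
  simp [altF]

lemma mem_R_diff_G_of_mem_altNext {q q' : S.Q} {i : Fin k} {a : Alph}
    (h : Sum.inr (q', some i) ∈ S.altNext (Sum.inr (q, some i)) a) : q' ∈ S.R i \ S.G i := by
  obtain ⟨c', hx, hI, hG⟩ := h
  obtain ⟨rfl, rfl⟩ : q' = S.next q a ∧ some i = c' := by simpa using hx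
  refine ⟨?_, fun hi => hG ⟨i, rfl, hi, rfl⟩⟩
  obtain ⟨j, hj, hR⟩ : ∃ j, some i = some j ∧ S.next q a ∈ S.R j := by
    simpa [Iset] using hI
  exact Option.some_injective _ hj ▸ hR

def universalRuns (w : ℕ → Alph) : Set (ℕ → AltState S) :=
  {f | S.alt.IsRun w f ∧ ∀ n, (f (n + 1)).isRight}

lemma exists_copies_of_mem_universalRuns {w : ℕ → Alph} {f : ℕ → AltState S}
    (hf : f ∈ S.universalRuns w) :
    ∃ c : ℕ → Copy k, ∀ n, f (n + 1) = Sum.inr (S.run w (n + 1), c n) := by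
  choose p hp using fun n => Sum.isRight_iff.mp (hf.2 n)
  refine ⟨fun n => (p n).2, fun n => ?_⟩
  have hproj := S.altProj_eq_run hf.1 (n + 1)
  rw [hp n] at hproj ⊢
  exact congrArg Sum.inr (Prod.ext hproj rfl)

theorem runAccepting_of_mem_universalRuns {w : ℕ → Alph} (hacc : S.Accepts w)
    {f : ℕ → AltState S} (hf : f ∈ S.universalRuns w) : S.alt.RunAccepting w f := by
  obtain ⟨c, hc⟩ := S.exists_copies_of_mem_universalRuns hf
  by_contra hfin
  have hnotF : ∀ᶠ n in atTop, (f (n + 1), w (n + 1), f (n + 1 + 1)) ∉ S.altF :=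
    (tendsto_add_atTop_nat 1).eventually
      (not_frequently.mp (mt Nat.frequently_atTop_iff_infinite.mp hfin))
  obtain ⟨N, hN⟩ : ∃ N, ∀ n ≥ N, c (n + 1) = c n ∧ c n ≠ none := by
    obtain ⟨N, hN⟩ := eventually_atTop.mp hnotF
    refine ⟨N, fun n hn => ?_⟩
    have h := hN n hn
    rw [hc n, hc (n + 1), mem_altF_iff] at h
    have hcopy : c n = c (n + 1) := not_not.mp fun hne => h (Or.inl hne)
    exact ⟨hcopy.symm, fun hnone => h (Or.inr ⟨hnone, hcopy ▸ hnone⟩)⟩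
  have hconst : ∀ n ≥ N, c n = c N := fun n hn =>
    Nat.le_induction rfl (fun m hm ih => (hN m hm).1.trans ih) n hn
  obtain ⟨i, hi⟩ := Option.ne_none_iff_exists'.mp (hN N le_rfl).2
  refine hacc.not_eventually_mem_diff i (N + 2) fun n hn => ?_
  obtain ⟨m, rfl⟩ : ∃ m, n = m + 2 := ⟨n - 2, by omega⟩
  have hstep := hf.1.2 (m + 1)
  rw [hc m, hc (m + 1), hconst m (by omega), hconst (m + 1) (by omega), hi] at hstep
  exact S.mem_R_diff_G_of_mem_altNext hstep

lemma exists_mem_universalRuns_extending {w : ℕ → Alph} {f : ℕ → AltState S}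
    (hf : S.alt.IsRun w f) {i : ℕ} (hr : ∀ n < i, (f (n + 1)).isRight) {c : Copy k}
    (hi : Sum.inr (S.run w (i + 1), c) ∈ S.altNext (f i) (w i)) :
    ∃ f' ∈ S.universalRuns w,
      (∀ l ≤ i, f' l = f l) ∧ f' (i + 1) = Sum.inr (S.run w (i + 1), c) := by
  let g : ℕ → AltState S := fun n => Sum.inr (S.run w n, if n = i + 1 then c else none)
  refine ⟨fun n => if n ≤ i then f n else g n,
    ⟨hf.splice (by simp only [g]; exact hi) fun n hn => ?_, fun n => ?_⟩,
    fun l hl => if_pos hl, by simp [g]⟩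
  · simp only [g, if_neg (show n + 1 ≠ i + 1 by omega)]
    exact S.inr_none_mem_altNext _ _ _
  · by_cases hn : n + 1 ≤ i
    · simpa [hn] using hr n (by omega)
    · simp [hn, g]

lemma universalRuns_nonempty (w : ℕ → Alph) : (S.universalRuns w).Nonempty := by
  have hrun : S.alt.IsRun w fun n => Sum.inl (S.run w n) := ⟨rfl, fun n => Or.inl rfl⟩
  obtain ⟨f, hf, -⟩ := S.exists_mem_universalRuns_extending hrun (i := 0) (c := none)
    (fun _ h => absurd h (Nat.not_lt_zero _)) (Or.inr rfl)
  exact ⟨f, hf⟩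

lemma exists_copy_of_mem_altNext {w : ℕ → Alph} {f : ℕ → AltState S} (hf : S.alt.IsRun w f)
    {i : ℕ} (hi : (f i).isRight) {y : AltState S} (hy : y ∈ S.altNext (f i) (w i)) :
    ∃ c, y = Sum.inr (S.run w (i + 1), c) := by
  obtain ⟨⟨q, c⟩, hq⟩ := Sum.isRight_iff.mp hi
  have hproj : q = S.run w i := by simpa [hq, altProj] using S.altProj_eq_run hf i
  rw [hq, hproj] at hy
  obtain ⟨c', rfl, -⟩ := hy
  exact ⟨c', rfl⟩

end DSA

/-- If the run of the deterministic Streett automaton `S` on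
`w` satisfies the Streett acceptance condition, then there is an accepting run
tree of `A(S)` on `w`. -/
theorem streett_accepts_imp_alt_accepts (Alph : Type) (k : ℕ)
    (St : DSA Alph k) (w : ℕ → Alph) :
    St.Accepts w → (St.alt).Accepts w := by
  intro hacc
  refine ⟨St.universalRuns w, Subtype.val, ⟨(St.universalRuns_nonempty w).to_subtype,
    fun f => f.2.1, ?_⟩, fun f => St.runAccepting_of_mem_universalRuns hacc f.2⟩
  rintro ⟨f, hf⟩ i hi q' hq'
  obtain ⟨c, rfl⟩ := St.exists_copy_of_mem_altNext hf.1 hi hq'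
  obtain ⟨f', hf', hpre, hnext⟩ :=
    St.exists_mem_universalRuns_extending hf.1 (fun n _ => hf.2 n) hq'
  exact ⟨⟨f', hf'⟩, hpre, hnext⟩

end GFM
end

section
/- The three-state nondeterministic Büchi automaton A_φ over the alphabet {g, b} is not good-for-MDPs. Concretely: (a) A_φ accepts every ω-word over {g, b}, so the semantic satisfaction probability of L(A_φ) in the Markov chain M equals 1; but (b) for every strategy on the product MDP M × A_φ, the probability of taking accepting transitions infinitely often is 0. -/
open scoped ENNReal

set_option maxHeartbeats 1000000

namespace GFM

variable {Alph : Type} {k : ℕ}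

/-- The three states of the automaton `A_φ`. -/
inductive Q3 : Type
  | q0 | q1 | q2
  deriving DecidableEq

instance instFintypeQ3 : Fintype Q3 :=
  ⟨{Q3.q0, Q3.q1, Q3.q2}, fun x => by cases x <;> simp⟩

/-- The NBA `A_φ` (with transition-based acceptance) over the alphabet
`{g, b}`, with `g = true` and `b = false`: it recognises the words with
infinitely many `g`'s or infinitely many `b`'s, i.e. all ω-words. -/
def Aphi : NBAt Bool where
  Q := Q3
  init := Q3.q0
  next := fun q ℓ =>
    match q with
    | Q3.q0 => {Q3.q1, Q3.q2}
    | Q3.q1 => {x | ℓ = true ∧ x = Q3.q0}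
    | Q3.q2 => {x | ℓ = false ∧ x = Q3.q0}
  F := {t | t = (Q3.q1, true, Q3.q0) ∨ t = (Q3.q2, false, Q3.q0)}

/-- The Markov chain `M`: states `s₀ = true` (labeled `g = true`) and
`s₁ = false` (labeled `b = false`), a single action, and each successor chosen
uniformly at random. -/
noncomputable def chainM : FinMDP Bool where
  S := Bool
  init := true
  Act := Unit
  enabled := fun _ => {()}
  enabled_nonempty := fun _ => ⟨(), by simp⟩
  T := fun _ _ _ => 2⁻¹
  T_sum := by
    intro s a _
    rw [Fintype.sum_bool]
    exact ENNReal.inv_two_add_inv_two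
  label := id


/-! `A_φ` accepts every word: at even positions it guesses the next letter, at odd positions it
checks the guess, and the run that always guesses right takes an accepting transition every
other step. In the product with the fair-coin chain `M`, however, the guess has to be made before
the next letter is drawn, so under any strategy the run is blocked with probability `1/2` every
second step. Hence the automaton is still alive at step `n + 1` with probability at most
`2^{-⌊n/2⌋}`, which is summable, and by Borel–Cantelli almost no run takes accepting transitions
infinitely often. -/

open MeasureTheory

lemma psemSatFrom_eq_one_of_forall_mem {Alph : Type} {M : FinMDP Alph} {s0 : M.S}
    {L : Set (ℕ → Alph)} (hL : ∀ w, w ∈ L) {σ : MStrat M} (hσ : MStratValid M σ)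
    {μ : @Measure (ℕ → M.S × M.Act) (trajMS (M.S × M.Act))} (hμ : IsMDPRunMeasure M σ s0 μ) :
    PSemSatFrom M s0 L = 1 := by
  have h_univ : {r : ℕ → M.S × M.Act | (fun n => M.label (r n).1) ∈ L} = Set.univ :=
    Set.eq_univ_of_forall fun r => hL _
  simp only [PSemSatFrom, mdpEventProbFrom, h_univ]
  refine le_antisymm (iSup₂_le fun _ _ => iSup₂_le fun ν hν => hν.1.le) ?_
  exact le_iSup₂_of_le σ hσ (le_iSup₂_of_le μ hμ hμ.1.ge)

section PrefixRun

variable {X : Type*} {n : ℕ}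

def prefixRun (v : Fin (n + 1) → X) : ℕ → X := fun i => v ⟨min i n, by omega⟩

lemma prefixRun_of_le (v : Fin (n + 1) → X) {i : ℕ} (hi : i ≤ n) :
    prefixRun v i = v ⟨i, by omega⟩ := by
  simp [prefixRun, Nat.min_eq_left hi]

lemma prefixRun_last (v : Fin (n + 1) → X) : prefixRun v n = v (Fin.last n) :=
  prefixRun_of_le v le_rfl

lemma prefixRun_snoc_of_le (u : Fin (n + 1) → X) (x : X) {i : ℕ} (hi : i ≤ n) :
    prefixRun (Fin.snoc u x : Fin (n + 2) → X) i = prefixRun u i := by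
  rw [prefixRun_of_le _ (by omega), prefixRun_of_le _ hi]
  exact Fin.snoc_castSucc (α := fun _ => X) (i := ⟨i, by omega⟩) ..

lemma prefixRun_snoc_succ (u : Fin (n + 1) → X) (x : X) :
    prefixRun (Fin.snoc u x : Fin (n + 2) → X) (n + 1) = x := by
  rw [prefixRun_last, Fin.snoc_last]

lemma sum_fin_pi_eq_sum_snoc {R : Type*} [AddCommMonoid R] [Fintype X]
    (g : (Fin (n + 2) → X) → R) :
    ∑ v, g v = ∑ u : Fin (n + 1) → X, ∑ x, g (Fin.snoc u x) := by
  rw [← (Fin.snocEquiv fun _ => X).sum_comp, Fintype.sum_prod_type, Finset.sum_comm]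
  rfl

end PrefixRun

section ProductPrefix

variable {Alph : Type} {M : FinMDP Alph} {B : NBAt Alph} (σ : TStrat M B) (s0 : M.S)

abbrev TStep (M : FinMDP Alph) (B : NBAt Alph) : Type := TPos M B × TChoice M B

/-- The expectation of `f` at the next step of the product, from step `x` after history `h`. -/
noncomputable def stepExpect (x : TStep M B) (h : List (TStep M B)) (f : TStep M B → ℝ≥0∞) :
    ℝ≥0∞ :=
  ∑ e : TStep M B, M.T x.1.1 x.2.1 e.1.1 * (if x.2.2 = e.1.2 then 1 else 0) * σ h e.1 e.2 * f e

/-- The expectation of `f` at step `n`, as a sum over the prefixes of length `n + 1`. -/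
noncomputable def prefixExpect (n : ℕ) (f : TStep M B → ℝ≥0∞) : ℝ≥0∞ :=
  ∑ v : Fin (n + 1) → TStep M B, tPrefixProb M B σ s0 (prefixRun v) n * f (v (Fin.last n))

variable {σ s0}

lemma tPrefixProb_congr {r r' : ℕ → TStep M B} {n : ℕ} (h : ∀ i ≤ n, r i = r' i) :
    tPrefixProb M B σ s0 r n = tPrefixProb M B σ s0 r' n := by
  induction n with
  | zero => simp only [tPrefixProb, h 0 le_rfl]
  | succ n ih =>
    have h_hist : (List.range (n + 1)).map r = (List.range (n + 1)).map r' :=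
      List.map_congr_left fun i hi => h i (by simp at hi; omega)
    simp only [tPrefixProb, ih fun i hi => h i (by omega), h n (by omega), h (n + 1) le_rfl,
      h_hist]

lemma tPrefixProb_prefixRun_snoc {n : ℕ} (u : Fin (n + 1) → TStep M B) (e : TStep M B) :
    tPrefixProb M B σ s0 (prefixRun (Fin.snoc u e : Fin (n + 2) → TStep M B)) (n + 1) =
      tPrefixProb M B σ s0 (prefixRun u) n *
        (M.T (u (Fin.last n)).1.1 (u (Fin.last n)).2.1 e.1.1 *
          (if (u (Fin.last n)).2.2 = e.1.2 then 1 else 0) *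
          σ ((List.range (n + 1)).map (prefixRun u)) e.1 e.2) := by
  have h_init : ∀ i ≤ n, prefixRun (Fin.snoc u e : Fin (n + 2) → TStep M B) i = prefixRun u i :=
    fun i hi => prefixRun_snoc_of_le u e hi
  have h_hist : (List.range (n + 1)).map (prefixRun (Fin.snoc u e : Fin (n + 2) → _)) =
      (List.range (n + 1)).map (prefixRun u) :=
    List.map_congr_left fun i hi => h_init i (by simp at hi; omega)
  rw [tPrefixProb, tPrefixProb_congr h_init, h_init n le_rfl, prefixRun_last,
    prefixRun_snoc_succ, h_hist, mul_assoc, mul_assoc, mul_assoc]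

lemma prefixExpect_zero (f : TStep M B → ℝ≥0∞) :
    prefixExpect σ s0 0 f = ∑ c, σ [] (s0, some B.init) c * f ((s0, some B.init), c) := by
  rw [prefixExpect, ← (Equiv.funUnique (Fin 1) (TStep M B)).symm.sum_comp,
    Fintype.sum_prod_type, Finset.sum_eq_single (s0, some B.init)]
  · simp [tPrefixProb, prefixRun]
  · intro p _ hp
    simp [tPrefixProb, prefixRun, hp]
  · simp

lemma prefixExpect_succ (n : ℕ) (f : TStep M B → ℝ≥0∞) :
    prefixExpect σ s0 (n + 1) f = ∑ u : Fin (n + 1) → TStep M B,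
      tPrefixProb M B σ s0 (prefixRun u) n *
        stepExpect σ (u (Fin.last n)) ((List.range (n + 1)).map (prefixRun u)) f := by
  rw [prefixExpect, sum_fin_pi_eq_sum_snoc]
  refine Finset.sum_congr rfl fun u _ => ?_
  simp only [stepExpect, Finset.mul_sum, Fin.snoc_last, tPrefixProb_prefixRun_snoc, mul_assoc]

lemma prefixExpect_succ_le {n : ℕ} {f g : TStep M B → ℝ≥0∞}
    (hfg : ∀ x h, stepExpect σ x h f ≤ g x) :
    prefixExpect σ s0 (n + 1) f ≤ prefixExpect σ s0 n g := by
  rw [prefixExpect_succ, prefixExpect]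
  gcongr with u
  exact hfg _ _

lemma prefixExpect_const_mul (n : ℕ) (c : ℝ≥0∞) (f : TStep M B → ℝ≥0∞) :
    prefixExpect σ s0 n (fun e => c * f e) = c * prefixExpect σ s0 n f := by
  simp only [prefixExpect, Finset.mul_sum, mul_left_comm]

lemma TStratValid.sum_mul_le (hσ : TStratValid M B σ) (h : List (TStep M B)) (p : TPos M B)
    {F : TChoice M B → ℝ≥0∞} {b : ℝ≥0∞}
    (hF : ∀ c : TChoice M B, c.2 ∈ B.allowed (M.label p.1) p.2 → F c ≤ b) :
    ∑ c, σ h p c * F c ≤ b :=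
  calc ∑ c, σ h p c * F c ≤ ∑ c, σ h p c * b := by
        refine Finset.sum_le_sum fun c _ => ?_
        by_cases hc : c.2 ∈ B.allowed (M.label p.1) p.2
        · exact mul_le_mul_right (hF c hc) _
        · rw [(hσ h p).2.2 c hc, zero_mul, zero_mul]
    _ = b := by rw [← Finset.sum_mul, (hσ h p).1, one_mul]

lemma prefixExpect_zero_le_one (hσ : TStratValid M B σ) {f : TStep M B → ℝ≥0∞}
    (hf : ∀ e, f e ≤ 1) : prefixExpect σ s0 0 f ≤ 1 := by
  rw [prefixExpect_zero]
  exact hσ.sum_mul_le [] _ fun c _ => hf _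

lemma stepExpect_le (hσ : TStratValid M B σ) (x : TStep M B) (h : List (TStep M B))
    {f : TStep M B → ℝ≥0∞} {g : M.S → ℝ≥0∞}
    (hf : ∀ s c, c.2 ∈ B.allowed (M.label s) x.2.2 → f ((s, x.2.2), c) ≤ g s) :
    stepExpect σ x h f ≤ ∑ s, M.T x.1.1 x.2.1 s * g s :=
  calc stepExpect σ x h f
      = ∑ s, M.T x.1.1 x.2.1 s * ∑ c, σ h (s, x.2.2) c * f ((s, x.2.2), c) := by
        simp only [stepExpect, Fintype.sum_prod_type, Finset.mul_sum]
        refine Finset.sum_congr rfl fun s _ => ?_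
        rw [Finset.sum_eq_single x.2.2]
        · simp [mul_assoc]
        · intro y _ hy
          simp [Ne.symm hy]
        · simp
    _ ≤ ∑ s, M.T x.1.1 x.2.1 s * g s := by
        gcongr with s
        exact hσ.sum_mul_le h (s, x.2.2) (hf s)

lemma measure_le_prefixExpect
    {μ : @Measure (ℕ → TStep M B) (trajMS (TStep M B))} (hμ : IsTRunMeasure M B σ s0 μ)
    (n : ℕ) {S : Set (TStep M B)} {f : TStep M B → ℝ≥0∞} (hf : ∀ e ∈ S, 1 ≤ f e) :
    μ {r | r n ∈ S} ≤ prefixExpect σ s0 n f := by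
  classical
  let T := (Finset.univ : Finset (Fin (n + 1) → TStep M B)).filter (· (Fin.last n) ∈ S)
  have h_cover : {r : ℕ → TStep M B | r n ∈ S} ⊆
      ⋃ v ∈ T, {r' | ∀ i ≤ n, r' i = prefixRun v i} := by
    intro r hr
    refine Set.mem_iUnion₂.2 ⟨fun i : Fin (n + 1) => r i, by simpa [T] using hr, fun i hi => ?_⟩
    rw [prefixRun_of_le _ hi]
  calc μ {r | r n ∈ S}
      ≤ ∑ v ∈ T, μ {r' | ∀ i ≤ n, r' i = prefixRun v i} :=
        (measure_mono h_cover).trans (measure_biUnion_finset_le _ _)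
    _ = ∑ v ∈ T, tPrefixProb M B σ s0 (prefixRun v) n :=
        Finset.sum_congr rfl fun v _ => hμ.2 _ n
    _ ≤ ∑ v ∈ T, tPrefixProb M B σ s0 (prefixRun v) n * f (v (Fin.last n)) :=
        Finset.sum_le_sum fun v hv => le_mul_of_one_le_right' (hf _ (Finset.mem_filter.1 hv).2)
    _ ≤ prefixExpect σ s0 n f := Finset.sum_le_sum_of_subset (Finset.filter_subset _ _)

lemma tAccSet_subset_limsup :
    tAccSet M B ⊆ Filter.limsup (fun n => {r | (r (n + 1)).1.2 ≠ none}) Filter.atTop := by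
  intro r hr
  rw [Filter.mem_limsup_iff_frequently_mem, Nat.frequently_atTop_iff_infinite]
  refine hr.mono fun i hi => ?_
  obtain ⟨_, _, _, hi, _⟩ := hi
  simp [hi]

end ProductPrefix

lemma ENNReal.tsum_inv_two_pow_div_two : ∑' n : ℕ, (2⁻¹ : ℝ≥0∞) ^ (n / 2) = 4 := by
  rw [← tsum_even_add_odd ENNReal.summable ENNReal.summable]
  simp only [show ∀ k, 2 * k / 2 = k by omega, show ∀ k, (2 * k + 1) / 2 = k by omega,
    ENNReal.tsum_geometric, ENNReal.one_sub_inv_two, inv_inv]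
  norm_num

section Aphi

variable {ℓ : Bool} {z : Option Aphi.Q}

lemma aphi_accepts (w : ℕ → Bool) : Aphi.Accepts w := by
  let ρ : ℕ → Q3 := fun i => if Even i then .q0 else if w i then .q1 else .q2
  have h_even : ∀ i, Even i → ρ i = .q0 ∧ ρ (i + 1) = if w (i + 1) then .q1 else .q2 :=
    fun i hi => by simp [ρ, hi, Nat.even_add_one]
  have h_odd : ∀ i, Odd i → ρ i = (if w i then .q1 else .q2) ∧ ρ (i + 1) = .q0 :=
    fun i hi => by simp [ρ, hi.add_one, Nat.not_even_iff_odd.2 hi]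
  refine ⟨ρ, ⟨(h_even 0 .zero).1, fun i => ?_⟩, ?_⟩
  · rcases Nat.even_or_odd i with hi | hi
    · rw [(h_even i hi).1, (h_even i hi).2]
      cases w (i + 1)
      exacts [Or.inr rfl, Or.inl rfl]
    · rw [(h_odd i hi).1, (h_odd i hi).2]
      cases w i
      exacts [⟨rfl, rfl⟩, ⟨rfl, rfl⟩]
  · have h_inf : {i : ℕ | Odd i}.Infinite := Nat.frequently_atTop_iff_infinite.1 <|
      Filter.frequently_atTop.2 fun n => ⟨2 * n + 1, by omega, odd_two_mul_add_one n⟩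
    refine h_inf.mono fun i (hi : Odd i) => ?_
    show (ρ i, w i, ρ (i + 1)) ∈ Aphi.F
    rw [(h_odd i hi).1, (h_odd i hi).2]
    cases w i
    exacts [Or.inr rfl, Or.inl rfl]

lemma eq_none_of_mem_aphi_allowed_none (hz : z ∈ Aphi.allowed ℓ none) : z = none := hz

lemma eq_q1_or_eq_q2_of_mem_aphi_allowed_q0 (hz : z ∈ Aphi.allowed ℓ (some Q3.q0)) :
    z = some Q3.q1 ∨ z = some Q3.q2 := by
  obtain ⟨h_empty, -⟩ | ⟨q, hq | hq, rfl⟩ := hz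
  · exact (h_empty.subset (Or.inl rfl : Q3.q1 ∈ Aphi.next Q3.q0 ℓ)).elim
  · exact Or.inl (congrArg some hq)
  · exact Or.inr (congrArg some hq)

lemma eq_of_mem_aphi_allowed_q1 (hz : z ∈ Aphi.allowed ℓ (some Q3.q1)) :
    z = if ℓ then some Q3.q0 else none := by
  obtain ⟨h_empty, rfl⟩ | ⟨q, ⟨rfl, rfl⟩, rfl⟩ := hz
  · cases ℓ
    · rfl
    · exact (h_empty.subset (⟨rfl, rfl⟩ : Q3.q0 ∈ Aphi.next Q3.q1 true)).elim
  · rfl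

lemma eq_of_mem_aphi_allowed_q2 (hz : z ∈ Aphi.allowed ℓ (some Q3.q2)) :
    z = if ℓ then none else some Q3.q0 := by
  obtain ⟨h_empty, rfl⟩ | ⟨q, ⟨rfl, rfl⟩, rfl⟩ := hz
  · cases ℓ
    · exact (h_empty.subset (⟨rfl, rfl⟩ : Q3.q0 ∈ Aphi.next Q3.q2 false)).elim
    · rfl
  · rfl

end Aphi

section ChainMRuns

local notation "E" => chainM.S × chainM.Act

def chainMStrat : MStrat chainM := fun _ _ _ => 1

lemma mStratValid_chainMStrat : MStratValid chainM chainMStrat :=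
  fun _ _ => ⟨by simp [chainMStrat, chainM], fun a ha => (ha (Finset.mem_singleton_self a)).elim⟩

lemma mdpPrefixProb_chainMStrat (r : ℕ → E) (n : ℕ) :
    mdpPrefixProb chainM chainMStrat chainM.init r n =
      (if (r 0).1 = chainM.init then 1 else 0) * 2⁻¹ ^ n := by
  induction n with
  | zero => rw [mdpPrefixProb, pow_zero]; rfl
  | succ n ih =>
    rw [mdpPrefixProb, ih]
    show _ * 2⁻¹ * 1 = _
    rw [mul_one, pow_succ, mul_assoc]

noncomputable def coinFlipPMF (n : ℕ) : PMF E :=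
  haveI : Nonempty E := ⟨(chainM.init, ())⟩
  if n = 0 then PMF.pure (chainM.init, ()) else PMF.uniformOfFintype _

/-- The runs of `M` start in `s₀` and then flip a fair coin at every step. -/
noncomputable def chainMRunMeasure : @Measure (ℕ → E) (trajMS _) :=
  letI : MeasurableSpace E := ⊤
  Measure.infinitePi fun n => (coinFlipPMF n).toMeasure

lemma chainMRunMeasure_cylinder (r : ℕ → E) (n : ℕ) :
    chainMRunMeasure {r' | ∀ i ≤ n, r' i = r i} =
      (if (r 0).1 = chainM.init then 1 else 0) * 2⁻¹ ^ n := by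
  let _ : MeasurableSpace E := ⊤
  have h_cyl : {r' : ℕ → E | ∀ i ≤ n, r' i = r i} =
      Set.pi (Finset.range (n + 1) : Set ℕ) fun i => {r i} := by
    ext r'; simp
  have h_zero : (coinFlipPMF 0).toMeasure {r 0} = if (r 0).1 = chainM.init then 1 else 0 := by
    rw [PMF.toMeasure_apply_singleton _ _ MeasurableSpace.measurableSet_top, coinFlipPMF,
      if_pos rfl, PMF.pure_apply]
    congr 1
    exact propext ⟨congrArg Prod.fst, fun h => Prod.ext h rfl⟩
  have h_succ (i : ℕ) : (coinFlipPMF (i + 1)).toMeasure {r (i + 1)} = 2⁻¹ := by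
    have h_card : Fintype.card E = 2 := rfl
    rw [PMF.toMeasure_apply_singleton _ _ MeasurableSpace.measurableSet_top]
    simp [coinFlipPMF, PMF.uniformOfFintype_apply, h_card]
  rw [h_cyl]
  refine (Measure.infinitePi_pi (μ := fun n => (coinFlipPMF n).toMeasure)
    fun _ _ => trivial).trans ?_
  rw [Finset.prod_range_succ', h_zero]
  simp [h_succ, mul_comm]

lemma isMDPRunMeasure_chainMRunMeasure :
    IsMDPRunMeasure chainM chainMStrat chainM.init chainMRunMeasure := by
  let _ : MeasurableSpace E := ⊤
  refine ⟨measure_univ (μ := Measure.infinitePi fun n => (coinFlipPMF n).toMeasure),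
    fun r n => ?_⟩
  rw [mdpPrefixProb_chainMStrat, chainMRunMeasure_cylinder]

end ChainMRuns

section ChainMTimesAphi

variable {σ : TStrat chainM Aphi}

lemma stepExpect_chainM_le (hσ : TStratValid chainM Aphi σ) (x : TStep chainM Aphi)
    (h : List (TStep chainM Aphi)) {f : TStep chainM Aphi → ℝ≥0∞} {g : Bool → ℝ≥0∞}
    (hf : ∀ s c, c.2 ∈ Aphi.allowed s x.2.2 → f ((s, x.2.2), c) ≤ g s) :
    stepExpect σ x h f ≤ 2⁻¹ * g true + 2⁻¹ * g false :=
  (stepExpect_le hσ x h hf).trans_eq (Fintype.sum_bool _)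

def aliveIndicator : Option Q3 → ℝ≥0∞
  | none => 0
  | some _ => 1

/-- From `q₁` or `q₂` the guessed next letter is wrong with probability `1/2`. -/
noncomputable def survivalBound : Option Q3 → ℝ≥0∞
  | none => 0
  | some .q0 => 1
  | some _ => 2⁻¹

lemma aliveIndicator_le_one (y : Option Q3) : aliveIndicator y ≤ 1 := by
  cases y <;> simp [aliveIndicator]

lemma survivalBound_le_one (y : Option Q3) : survivalBound y ≤ 1 := by
  rcases y with _ | _ | _ | _ <;> simp [survivalBound, ENNReal.inv_le_one]

lemma stepExpect_aliveIndicator_pos_le (hσ : TStratValid chainM Aphi σ) (x : TStep chainM Aphi)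
    (h : List (TStep chainM Aphi)) :
    stepExpect σ x h (fun e => aliveIndicator e.1.2) ≤ aliveIndicator x.2.2 :=
  (stepExpect_chainM_le hσ x h (g := fun _ => aliveIndicator x.2.2) fun _ _ _ => le_rfl).trans_eq
    (by rw [← add_mul, ENNReal.inv_two_add_inv_two, one_mul])

lemma stepExpect_aliveIndicator_le (hσ : TStratValid chainM Aphi σ) (x : TStep chainM Aphi)
    (h : List (TStep chainM Aphi)) :
    stepExpect σ x h (fun e => aliveIndicator e.2.2) ≤ survivalBound x.2.2 := by
  obtain ⟨⟨s, y⟩, a, _ | _ | _ | _⟩ := x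
  · refine (stepExpect_chainM_le hσ _ h (g := fun _ => 0) fun s c hc => ?_).trans (by simp)
    simp [eq_none_of_mem_aphi_allowed_none hc, aliveIndicator]
  · refine (stepExpect_chainM_le hσ _ h (g := fun _ => 1) fun s c hc => ?_).trans
      (by simp [survivalBound, ENNReal.inv_two_add_inv_two])
    rcases eq_q1_or_eq_q2_of_mem_aphi_allowed_q0 hc with hc | hc <;> simp [hc, aliveIndicator]
  · refine (stepExpect_chainM_le hσ _ h (g := fun s => if s then 1 else 0)
      fun s c hc => ?_).trans (by simp [survivalBound])
    cases s <;> simp [eq_of_mem_aphi_allowed_q1 hc, aliveIndicator]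
  · refine (stepExpect_chainM_le hσ _ h (g := fun s => if s then 0 else 1)
      fun s c hc => ?_).trans (by simp [survivalBound])
    cases s <;> simp [eq_of_mem_aphi_allowed_q2 hc, aliveIndicator]

lemma stepExpect_survivalBound_le (hσ : TStratValid chainM Aphi σ) (x : TStep chainM Aphi)
    (h : List (TStep chainM Aphi)) :
    stepExpect σ x h (fun e => survivalBound e.2.2) ≤ 2⁻¹ * aliveIndicator x.2.2 := by
  obtain ⟨⟨s, y⟩, a, _ | _ | _ | _⟩ := x
  · refine (stepExpect_chainM_le hσ _ h (g := fun _ => 0) fun s c hc => ?_).trans (by simp)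
    simp [eq_none_of_mem_aphi_allowed_none hc, survivalBound]
  · refine (stepExpect_chainM_le hσ _ h (g := fun _ => 2⁻¹) fun s c hc => ?_).trans
      (by simp [aliveIndicator, ← add_mul, ENNReal.inv_two_add_inv_two])
    rcases eq_q1_or_eq_q2_of_mem_aphi_allowed_q0 hc with hc | hc <;> simp [hc, survivalBound]
  · refine (stepExpect_chainM_le hσ _ h (g := fun s => if s then 1 else 0)
      fun s c hc => ?_).trans (by simp [aliveIndicator])
    cases s <;> simp [eq_of_mem_aphi_allowed_q1 hc, survivalBound]
  · refine (stepExpect_chainM_le hσ _ h (g := fun s => if s then 0 else 1)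
      fun s c hc => ?_).trans (by simp [aliveIndicator])
    cases s <;> simp [eq_of_mem_aphi_allowed_q2 hc, survivalBound]

lemma prefixExpect_aliveIndicator_le (hσ : TStratValid chainM Aphi σ) (n : ℕ) :
    prefixExpect σ chainM.init n (fun e => aliveIndicator e.2.2) ≤ 2⁻¹ ^ (n / 2) ∧
      prefixExpect σ chainM.init n (fun e => survivalBound e.2.2) ≤ 2⁻¹ ^ ((n + 1) / 2) := by
  induction n with
  | zero =>
    constructor
    · simpa using prefixExpect_zero_le_one hσ fun e => aliveIndicator_le_one e.2.2
    · simpa using prefixExpect_zero_le_one hσ fun e => survivalBound_le_one e.2.2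
  | succ n ih =>
    constructor
    · exact (prefixExpect_succ_le (stepExpect_aliveIndicator_le hσ)).trans ih.2
    · calc prefixExpect σ chainM.init (n + 1) (fun e => survivalBound e.2.2)
          ≤ prefixExpect σ chainM.init n (fun e => 2⁻¹ * aliveIndicator e.2.2) :=
            prefixExpect_succ_le (stepExpect_survivalBound_le hσ)
        _ ≤ 2⁻¹ * 2⁻¹ ^ (n / 2) := by
            rw [prefixExpect_const_mul]
            exact mul_le_mul_right ih.1 _
        _ = 2⁻¹ ^ ((n + 1 + 1) / 2) := by
            rw [← pow_succ', show (n + 1 + 1) / 2 = n / 2 + 1 by omega]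

lemma measure_alive_succ_le (hσ : TStratValid chainM Aphi σ)
    {μ : @Measure (ℕ → TStep chainM Aphi) (trajMS _)}
    (hμ : IsTRunMeasure chainM Aphi σ chainM.init μ) (n : ℕ) :
    μ {r | (r (n + 1)).1.2 ≠ none} ≤ 2⁻¹ ^ (n / 2) :=
  calc μ {r | (r (n + 1)).1.2 ≠ none}
      ≤ prefixExpect σ chainM.init (n + 1) (fun e => aliveIndicator e.1.2) :=
        measure_le_prefixExpect hμ (n + 1) (S := {e | e.1.2 ≠ none}) fun e he => by
          obtain ⟨⟨_, _ | _⟩, _⟩ := e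
          exacts [by simp at he, le_rfl]
    _ ≤ prefixExpect σ chainM.init n (fun e => aliveIndicator e.2.2) :=
        prefixExpect_succ_le (stepExpect_aliveIndicator_pos_le hσ)
    _ ≤ 2⁻¹ ^ (n / 2) := (prefixExpect_aliveIndicator_le hσ n).1

end ChainMTimesAphi

/-- The automaton `A_φ` is not good-for-MDPs:
(a) `A_φ` accepts every ω-word, and the semantic satisfaction probability of
its language in the Markov chain `M` is `1`; but
(b) under every strategy of the product `M × A_φ`, the probability of taking
accepting transitions infinitely often is `0`. -/
theorem aphi_not_good_for_MDPs :
    ((∀ w : ℕ → Bool, Aphi.Accepts w) ∧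
      PSemSat chainM {w | Aphi.Accepts w} = 1) ∧
    (∀ σ : TStrat chainM Aphi, TStratValid chainM Aphi σ →
      ∀ μ : @MeasureTheory.Measure (ℕ → TPos chainM Aphi × TChoice chainM Aphi)
        (trajMS (TPos chainM Aphi × TChoice chainM Aphi)),
        IsTRunMeasure chainM Aphi σ chainM.init μ →
          μ (tAccSet chainM Aphi) = 0) := by
  refine ⟨⟨aphi_accepts, psemSatFrom_eq_one_of_forall_mem aphi_accepts mStratValid_chainMStrat
    isMDPRunMeasure_chainMRunMeasure⟩, fun σ hσ μ hμ => ?_⟩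
  have h_summable : ∑' n, μ {r | (r (n + 1)).1.2 ≠ none} ≠ ⊤ :=
    ne_top_of_le_ne_top (by rw [ENNReal.tsum_inv_two_pow_div_two]; norm_num)
      (ENNReal.tsum_le_tsum (measure_alive_succ_le hσ hμ))
  exact measure_mono_null tAccSet_subset_limsup (measure_limsup_atTop_eq_zero h_summable)

end GFM
end

section
/- Let S be a deterministic Streett automaton with k Streett pairs, A(S) the alternating Büchi automaton constructed from S, and M a finite MDP over the alphabet of S. In the stochastic Büchi game M × A(S), for every MDP state s and every automaton state q ∈ Q, the acceptance player's value satisfies val(s, q) ≥ val(s, (q, 0)) ≥ val(s, (q, i)) for every i ∈ {1,…,k}, where val(s, x) = sup_σ inf_π of the probability that the acceptance player wins when the game starts in position (s, x). -/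
open scoped ENNReal

set_option maxHeartbeats 1000000

namespace GFM

variable {Alph : Type} {k : ℕ}

/-!
From `(q, 0)` and from `(q, i)` the same successors are offered (the forbidden successor
`(q', i)` with `q' ∈ G_i` never lies in `I_{q'}`, as `G_i ∩ R_i = ∅`), and from `q` the
acceptance player may move to `(q', 0)`, which is also a move of the rejection player from
`(q, 0)`. Hence every play from the lower start is matched by a play from the higher start
differing only in its first entry, which is irrelevant for the Büchi condition. The simulating
strategy cannot see the automaton part of the simulated strategy's first choice, so it plays
the conditional distribution of the simulated strategy given what it does see; this induces
exactly the image of the simulated play distribution.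
-/

noncomputable section StrategyWeights

variable {M : FinMDP Alph} {St : DSA Alph k}

abbrev GEntry (M : FinMDP Alph) (S : DSA Alph k) : Type := GPos M S × GChoice M S

theorem map_range_succ {E : Type} (r : ℕ → E) (n : ℕ) :
    (List.range (n + 1)).map r = r 0 :: (List.range n).map (fun m => r (m + 1)) := by
  rw [List.range_succ_eq_map, List.map_cons, List.map_map]
  rfl

theorem map_range_succ_update_zero {E : Type} (r : ℕ → E) (e : E) (n : ℕ) :
    (List.range (n + 1)).map (Function.update r 0 e) =
      e :: (List.range n).map (fun m => r (m + 1)) := by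
  simp [map_range_succ]

def AccStrat.weightAfter (σ : AccStrat M St) : GHist M St → GHist M St → ℝ≥0∞
  | _, [] => 1
  | past, e :: t => σ past e.1 e.2 * σ.weightAfter (past ++ [e]) t

def AccStrat.weight (σ : AccStrat M St) (h : GHist M St) : ℝ≥0∞ := σ.weightAfter [] h

theorem AccStrat.weightAfter_append_singleton (σ : AccStrat M St) (l : GHist M St)
    (e : GEntry M St) : ∀ past : GHist M St,
    σ.weightAfter past (l ++ [e]) = σ.weightAfter past l * σ (past ++ l) e.1 e.2 := by
  induction l with
  | nil => simp [weightAfter]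
  | cons f t ih => intro past; simp [weightAfter, ih, mul_assoc]

theorem AccStrat.weight_append_singleton (σ : AccStrat M St) (h : GHist M St)
    (e : GEntry M St) : σ.weight (h ++ [e]) = σ.weight h * σ h e.1 e.2 :=
  σ.weightAfter_append_singleton h e []

theorem AccStrat.weight_singleton (σ : AccStrat M St) (e : GEntry M St) :
    σ.weight [e] = σ [] e.1 e.2 := by
  simp [weight, weightAfter]

theorem AccStratValid.le_one {σ : AccStrat M St} (hσ : AccStratValid M St σ) (h : GHist M St)
    (p : GPos M St) (c : GChoice M St) : σ h p c ≤ 1 :=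
  (hσ h p).1 ▸ Finset.single_le_sum (fun _ _ => zero_le) (Finset.mem_univ c)

theorem AccStratValid.weightAfter_le_one {σ : AccStrat M St} (hσ : AccStratValid M St σ)
    (l : GHist M St) : ∀ past : GHist M St, σ.weightAfter past l ≤ 1 := by
  induction l with
  | nil => simp [AccStrat.weightAfter]
  | cons f t ih => exact fun past => mul_le_one' (hσ.le_one past f.1 f.2) (ih _)

theorem AccStratValid.weight_ne_top {σ : AccStrat M St} (hσ : AccStratValid M St σ)
    (h : GHist M St) : σ.weight h ≠ ⊤ :=
  ne_top_of_le_ne_top ENNReal.one_ne_top (hσ.weightAfter_le_one h [])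

def moveProb (π₀ : GPos M St → AltState St → ℝ≥0∞) (e : GEntry M St)
    (x : AltState St) : ℝ≥0∞ :=
  if e.1.2.isLeft then (if e.2.2 = x then 1 else 0) else π₀ e.1 x

def envWeight (π : RejStrat M St) (r : ℕ → GEntry M St) : ℕ → ℝ≥0∞
  | 0 => 1
  | n + 1 => envWeight π r n * M.T (r n).1.1 (r n).2.1 (r (n + 1)).1.1 *
      moveProb (π ((List.range n).map r)) (r n) (r (n + 1)).1.2

theorem gamePrefixProb_eq_mul (σ : AccStrat M St) (π : RejStrat M St) (s0 : M.S)
    (x0 : AltState St) (r : ℕ → GEntry M St) (n : ℕ) :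
    gamePrefixProb M St σ π s0 x0 r n =
      (if (r 0).1 = (s0, x0) then 1 else 0) * σ.weight ((List.range (n + 1)).map r) *
        envWeight π r n := by
  induction n with
  | zero => simp [gamePrefixProb, envWeight, σ.weight_singleton]
  | succ n ih =>
    rw [gamePrefixProb, ih, List.range_succ (n := n + 1), List.map_append, List.map_singleton,
      σ.weight_append_singleton, envWeight, moveProb]
    ring

end StrategyWeights

noncomputable section Transport

open Finset

variable {M : FinMDP Alph} {St : DSA Alph k} (σ : AccStrat M St) (s : M.S)
  (x0 y0 : AltState St) (χ : AltState St → AltState St)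

/-- The first entry of a play from `(s, y0)` that corresponds to the first choice `c` of a play
from `(s, x0)`. -/
def headEntry (c : GChoice M St) : GEntry M St := ((s, y0), (c.1, χ c.2))

def fiberWeight : GHist M St → ℝ≥0∞
  | [] => 1
  | e :: t => ∑ c with headEntry s y0 χ c = e, σ.weight (((s, x0), c) :: t)

/-- The `y0`-strategy that plays the conditional distribution of `σ`'s next choice given the
history seen so far: the first choice of `σ` is only known through its image under
`headEntry`. -/
def AccStrat.transport : AccStrat M St := fun h p c =>
  if ∑ c', fiberWeight σ s x0 y0 χ (h ++ [(p, c')]) = 0 then σ h p c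
  else fiberWeight σ s x0 y0 χ (h ++ [(p, c)]) *
    (∑ c', fiberWeight σ s x0 y0 χ (h ++ [(p, c')]))⁻¹

variable {σ s x0 y0 χ}

theorem fiberWeight_cons_append (e : GEntry M St) (t : GHist M St) (p : GPos M St)
    (c : GChoice M St) :
    fiberWeight σ s x0 y0 χ ((e :: t) ++ [(p, c)]) =
      ∑ c₀ with headEntry s y0 χ c₀ = e,
        σ.weight (((s, x0), c₀) :: t) * σ (((s, x0), c₀) :: t) p c := by
  simp only [fiberWeight, List.cons_append]
  refine sum_congr rfl fun c₀ _ => ?_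
  rw [← List.cons_append, σ.weight_append_singleton]

theorem sum_fiberWeight_cons_append (hσ : AccStratValid M St σ) (e : GEntry M St)
    (t : GHist M St) (p : GPos M St) :
    ∑ c, fiberWeight σ s x0 y0 χ ((e :: t) ++ [(p, c)]) =
      fiberWeight σ s x0 y0 χ (e :: t) := by
  simp only [fiberWeight_cons_append]
  rw [sum_comm]
  refine sum_congr rfl fun c₀ _ => ?_
  rw [← mul_sum, (hσ _ p).1, mul_one]

theorem sum_fiberWeight_singleton (hσ : AccStratValid M St σ) (p : GPos M St) :
    ∑ c, fiberWeight σ s x0 y0 χ [(p, c)] = if p = (s, y0) then 1 else 0 := by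
  simp only [fiberWeight, σ.weight_singleton]
  split_ifs with hp
  · subst hp
    simp only [headEntry, Prod.mk.injEq, true_and]
    rw [sum_fiberwise univ (fun c₀ : GChoice M St => (c₀.1, χ c₀.2))]
    exact (hσ [] (s, x0)).1
  · refine sum_eq_zero fun c _ => sum_eq_zero fun c₀ hc₀ => ?_
    exact absurd (congrArg Prod.fst (mem_filter.1 hc₀).2) (Ne.symm hp)

theorem fiberWeight_ne_top (hσ : AccStratValid M St σ) (h : GHist M St) :
    fiberWeight σ s x0 y0 χ h ≠ ⊤ := by
  cases h with
  | nil => exact ENNReal.one_ne_top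
  | cons e t => exact ENNReal.sum_ne_top.2 fun c₀ _ => hσ.weight_ne_top _

theorem fiberWeight_append_eq_zero {p : GPos M St} {c : GChoice M St}
    (hlater : ∀ h', σ h' p c = 0)
    (hfirst : ∀ c₀, headEntry s y0 χ c₀ = (p, c) → σ [] (s, x0) c₀ = 0)
    (h : GHist M St) :
    fiberWeight σ s x0 y0 χ (h ++ [(p, c)]) = 0 := by
  cases h with
  | nil =>
    refine sum_eq_zero fun c₀ hc₀ => ?_
    rw [σ.weight_singleton]
    exact hfirst c₀ (mem_filter.1 hc₀).2
  | cons e t =>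
    rw [fiberWeight_cons_append]
    exact sum_eq_zero fun c₀ _ => by rw [hlater, mul_zero]

theorem transport_valid (hσ : AccStratValid M St σ)
    (hχ : y0.isLeft → ∀ x, χ x ∈ St.altNext y0 (M.label s)) :
    AccStratValid M St (σ.transport s x0 y0 χ) := by
  intro h p
  by_cases hD : ∑ c', fiberWeight σ s x0 y0 χ (h ++ [(p, c')]) = 0
  · simpa only [AccStrat.transport, hD, if_true] using hσ h p
  simp only [AccStrat.transport, hD, if_false]
  refine ⟨?_, fun c hc => ?_, fun c hp hc => ?_⟩
  · rw [← sum_mul]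
    exact ENNReal.mul_inv_cancel hD (ENNReal.sum_ne_top.2 fun _ _ => fiberWeight_ne_top hσ _)
  · rw [fiberWeight_append_eq_zero (fun h' => (hσ h' p).2.1 c hc) ?_ h, zero_mul]
    intro c₀ hc₀
    simp only [headEntry, Prod.ext_iff] at hc₀
    exact (hσ [] (s, x0)).2.1 c₀ (by rw [hc₀.1.1, hc₀.2.1]; exact hc)
  · rw [fiberWeight_append_eq_zero (fun h' => (hσ h' p).2.2 c hp hc) ?_ h, zero_mul]
    intro c₀ hc₀
    simp only [headEntry, Prod.ext_iff] at hc₀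
    rw [← hc₀.1.2] at hp hc
    exact absurd (hc₀.2.2 ▸ hc₀.1.1 ▸ hχ hp c₀.2) hc

theorem fiberWeight_append_le (hσ : AccStratValid M St σ) {h : GHist M St} (hh : h ≠ [])
    (e : GEntry M St) :
    fiberWeight σ s x0 y0 χ (h ++ [e]) ≤ fiberWeight σ s x0 y0 χ h := by
  obtain ⟨f, t, rfl⟩ := List.exists_cons_of_ne_nil hh
  rw [← sum_fiberWeight_cons_append hσ f t e.1]
  exact single_le_sum (f := fun c => fiberWeight σ s x0 y0 χ ((f :: t) ++ [(e.1, c)]))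
    (fun _ _ => zero_le) (mem_univ e.2)

theorem fiberWeight_eq_transport_weight (hσ : AccStratValid M St σ) (e : GEntry M St)
    (t : GHist M St) :
    fiberWeight σ s x0 y0 χ (e :: t) =
      (if e.1 = (s, y0) then 1 else 0) * (σ.transport s x0 y0 χ).weight (e :: t) := by
  induction t using List.reverseRecOn with
  | nil =>
    simp only [AccStrat.weight_singleton, AccStrat.transport, List.nil_append,
      sum_fiberWeight_singleton hσ]
    by_cases h1 : e.1 = (s, y0)
    · simp only [if_pos h1, one_ne_zero, if_false, inv_one, mul_one, one_mul]
    · rw [if_neg h1, zero_mul]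
      exact sum_eq_zero fun c hc => absurd (congrArg Prod.fst (mem_filter.1 hc).2).symm h1
  | append_singleton t f ih =>
    rw [← List.cons_append, AccStrat.weight_append_singleton, ← mul_assoc, ← ih,
      AccStrat.transport, sum_fiberWeight_cons_append hσ]
    by_cases h0 : fiberWeight σ s x0 y0 χ (e :: t) = 0
    · rw [h0, zero_mul]
      exact le_antisymm (h0 ▸ fiberWeight_append_le hσ (List.cons_ne_nil e t) f) zero_le
    · rw [if_neg h0, mul_comm, mul_assoc, ENNReal.inv_mul_cancel h0 (fiberWeight_ne_top hσ _),
        mul_one]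

def RejStrat.withFirstMove (π₀ : GPos M St → AltState St → ℝ≥0∞)
    (g : GEntry M St → GEntry M St) (π : RejStrat M St) : RejStrat M St := fun h =>
  match h with
  | [] => π₀
  | e :: t => π (g e :: t)

theorem RejStratValid.withFirstMove {π₀ : GPos M St → AltState St → ℝ≥0∞}
    (hπ₀ : RejStratValid M St fun _ => π₀) (g : GEntry M St → GEntry M St)
    {π : RejStrat M St} (hπ : RejStratValid M St π) :
    RejStratValid M St (π.withFirstMove π₀ g) := by
  rintro (_ | ⟨e, t⟩) p
  · exact hπ₀ [] p
  · exact hπ _ p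

variable {π₀ : GPos M St → AltState St → ℝ≥0∞} {π : RejStrat M St}

theorem envWeight_update_zero
    (hmove : ∀ c x, moveProb π₀ ((s, x0), c) x = moveProb (π []) (headEntry s y0 χ c) x)
    (ρ : ℕ → GEntry M St) {c₀ : GChoice M St} (hc₀ : headEntry s y0 χ c₀ = ρ 0)
    (n : ℕ) :
    envWeight (π.withFirstMove π₀ fun e => headEntry s y0 χ e.2)
      (Function.update ρ 0 ((s, x0), c₀)) n = envWeight π ρ n := by
  induction n with
  | zero => rfl
  | succ n ih =>
    rw [envWeight, envWeight, ih]
    cases n with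
    | zero =>
      simp only [← hc₀, Function.update_self, List.range_zero,
        List.map_nil, RejStrat.withFirstMove, hmove]
      rfl
    | succ m =>
      simp only [Function.update_of_ne (Nat.succ_ne_zero _), map_range_succ_update_zero,
        RejStrat.withFirstMove, hc₀, ← map_range_succ]

theorem gamePrefixProb_transport (hσ : AccStratValid M St σ)
    (hmove : ∀ c x, moveProb π₀ ((s, x0), c) x = moveProb (π []) (headEntry s y0 χ c) x)
    (ρ : ℕ → GEntry M St) (n : ℕ) :
    gamePrefixProb M St (σ.transport s x0 y0 χ) π s y0 ρ n =
      ∑ e₀ with headEntry s y0 χ e₀.2 = ρ 0,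
        gamePrefixProb M St σ (π.withFirstMove π₀ fun e => headEntry s y0 χ e.2) s x0
          (Function.update ρ 0 e₀) n := by
  have hfirst : ∀ e₀ : GEntry M St, e₀.1 ≠ (s, x0) →
      gamePrefixProb M St σ (π.withFirstMove π₀ fun e => headEntry s y0 χ e.2) s x0
        (Function.update ρ 0 e₀) n = 0 := by
    intro e₀ he₀
    rw [gamePrefixProb_eq_mul, Function.update_self, if_neg he₀, zero_mul, zero_mul]
  calc gamePrefixProb M St (σ.transport s x0 y0 χ) π s y0 ρ n
      = fiberWeight σ s x0 y0 χ ((List.range (n + 1)).map ρ) * envWeight π ρ n := by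
        rw [gamePrefixProb_eq_mul, map_range_succ,
          fiberWeight_eq_transport_weight hσ]
    _ = ∑ c₀ with headEntry s y0 χ c₀ = ρ 0,
          gamePrefixProb M St σ (π.withFirstMove π₀ fun e => headEntry s y0 χ e.2) s x0
            (Function.update ρ 0 ((s, x0), c₀)) n := by
        rw [map_range_succ, fiberWeight, sum_mul]
        refine sum_congr rfl fun c₀ hc₀ => ?_
        rw [gamePrefixProb_eq_mul, Function.update_self, if_pos rfl, one_mul,
          map_range_succ_update_zero,
          envWeight_update_zero hmove ρ (mem_filter.1 hc₀).2]
    _ = _ := by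
        rw [sum_filter, sum_filter]
        conv_rhs => rw [Fintype.sum_prod_type]
        rw [Fintype.sum_eq_single (s, x0) fun p hp => sum_eq_zero fun c _ => by
            rw [hfirst (p, c) hp, ite_self]]

end Transport

section Trajectories

open MeasureTheory Finset

variable {E : Type}

theorem measurableSet_cylinder (ρ : ℕ → E) (n : ℕ) :
    MeasurableSet[trajMS E] {r | ∀ i ≤ n, r i = ρ i} := by
  let _ : MeasurableSpace E := ⊤
  simp only [Set.ofPred_forall]
  exact .iInter fun i => .iInter fun _ =>
    measurable_pi_apply (X := fun _ : ℕ => E) i (MeasurableSpace.measurableSet_top (s := {ρ i}))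

theorem measurable_update_zero (g : E → E) :
    Measurable[trajMS E, trajMS E] fun r => Function.update r 0 (g (r 0)) := by
  let _ : MeasurableSpace E := ⊤
  refine measurable_pi_lambda _ fun i => ?_
  rcases i with _ | i
  · simp only [Function.update_self]
    exact measurable_from_top.comp (measurable_pi_apply 0)
  · simp only [Function.update_of_ne (Nat.succ_ne_zero i)]
    exact measurable_pi_apply (i + 1)

variable [Fintype E] [DecidableEq E]

theorem preimage_update_zero_cylinder (g : E → E) (ρ : ℕ → E) (n : ℕ) :
    (fun r => Function.update r 0 (g (r 0))) ⁻¹' {r | ∀ i ≤ n, r i = ρ i} =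
      ⋃ e ∈ ({e | g e = ρ 0} : Finset E),
        {r | ∀ i ≤ n, r i = Function.update ρ 0 e i} := by
  ext r
  simp only [Set.mem_preimage, Set.mem_ofPred_eq, Set.mem_iUnion, mem_filter, mem_univ,
    true_and, exists_prop]
  constructor
  · intro h
    refine ⟨r 0, by simpa using h 0 (Nat.zero_le n), fun i hi => ?_⟩
    rcases i with _ | i
    · simp
    · simpa using h (i + 1) hi
  · rintro ⟨e, he, h⟩ i hi
    rcases i with _ | i
    · simpa [he] using congrArg g (h 0 (Nat.zero_le n))
    · simpa using h (i + 1) hi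

theorem measure_preimage_update_zero_cylinder (μ : @Measure (ℕ → E) (trajMS E)) (g : E → E)
    (ρ : ℕ → E) (n : ℕ) :
    μ ((fun r => Function.update r 0 (g (r 0))) ⁻¹' {r | ∀ i ≤ n, r i = ρ i}) =
      ∑ e with g e = ρ 0, μ {r | ∀ i ≤ n, r i = Function.update ρ 0 e i} := by
  rw [preimage_update_zero_cylinder]
  refine measure_biUnion_finset (fun e _ e' _ hne => ?_) fun e _ => measurableSet_cylinder _ n
  refine Set.disjoint_left.2 fun r hr hr' => hne ?_
  simpa using (hr 0 (Nat.zero_le n)).symm.trans (hr' 0 (Nat.zero_le n))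

end Trajectories

section GameValue

open MeasureTheory Finset

attribute [local instance] trajMS

variable {M : FinMDP Alph} {St : DSA Alph k}

theorem update_zero_mem_gameWinSet {r : ℕ → GEntry M St} (hr : r ∈ gameWinSet M St)
    (e : GEntry M St) : Function.update r 0 e ∈ gameWinSet M St := by
  refine (Set.Infinite.sdiff hr (Set.finite_singleton 0)).mono ?_
  rintro (_ | i) ⟨hi, hi0⟩
  · exact absurd rfl hi0
  · simpa [Function.update_of_ne (Nat.succ_ne_zero _)] using hi

theorem gameValFrom_le_of_forall_exists (s : M.S) (x0 y0 : AltState St)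
    (h : ∀ σ, AccStratValid M St σ → ∃ σ', AccStratValid M St σ' ∧
      ∀ π', RejStratValid M St π' → ∃ π, RejStratValid M St π ∧
        ∀ μ, IsGameRunMeasure M St σ π s x0 μ →
          ∃ μ', IsGameRunMeasure M St σ' π' s y0 μ' ∧
            μ (gameWinSet M St) ≤ μ' (gameWinSet M St)) :
    gameValFrom M St s x0 ≤ gameValFrom M St s y0 := by
  refine iSup₂_le fun σ hσ => ?_
  obtain ⟨σ', hσ', H⟩ := h σ hσ
  refine le_iSup₂_of_le σ' hσ' (le_iInf₂ fun π' hπ' => ?_)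
  obtain ⟨π, hπ, H'⟩ := H π' hπ'
  refine iInf₂_le_of_le π hπ (iSup₂_le fun μ hμ => ?_)
  obtain ⟨μ', hμ', hle⟩ := H' μ hμ
  exact le_iSup₂_of_le μ' hμ' hle

/-- Against `π'`, the transported strategy induces the image, under relabelling the first entry,
of the play distribution of `σ` against `π'.withFirstMove π₀ _`; the Büchi condition does not
see the first entry. -/
theorem gameValFrom_le_of_transport (s : M.S) (x0 y0 : AltState St)
    (χ : AltState St → AltState St)
    (hχ : y0.isLeft → ∀ x, χ x ∈ St.altNext y0 (M.label s))
    (hfirst : ∀ π' : RejStrat M St, RejStratValid M St π' →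
      ∃ π₀ : GPos M St → AltState St → ℝ≥0∞, RejStratValid M St (fun _ => π₀) ∧
        ∀ c x, moveProb π₀ ((s, x0), c) x = moveProb (π' []) (headEntry s y0 χ c) x) :
    gameValFrom M St s x0 ≤ gameValFrom M St s y0 := by
  refine gameValFrom_le_of_forall_exists s x0 y0 fun σ hσ =>
    ⟨σ.transport s x0 y0 χ, transport_valid hσ hχ, fun π' hπ' => ?_⟩
  obtain ⟨π₀, hπ₀, hmove⟩ := hfirst π' hπ'
  refine ⟨π'.withFirstMove π₀ fun e => headEntry s y0 χ e.2, hπ₀.withFirstMove _ hπ',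
    fun μ hμ => ?_⟩
  have hΦ := measurable_update_zero fun e : GEntry M St => headEntry s y0 χ e.2
  refine ⟨μ.map fun r => Function.update r 0 (headEntry s y0 χ (r 0).2),
    ⟨?_, fun ρ n => ?_⟩, ?_⟩
  · rw [Measure.map_apply hΦ MeasurableSet.univ, Set.preimage_univ, hμ.1]
  · rw [Measure.map_apply hΦ (measurableSet_cylinder ρ n),
      measure_preimage_update_zero_cylinder μ (fun e => headEntry s y0 χ e.2),
      gamePrefixProb_transport hσ hmove]
    exact sum_congr rfl fun e _ => hμ.2 _ n
  · exact (measure_mono fun r hr => update_zero_mem_gameWinSet hr _).trans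
      (Measure.le_map_apply hΦ.aemeasurable _)

end GameValue

/-- The successors of `(z, c)` do not depend on the copy `c`: the excluded successor
`(z', i)` with `z' ∈ G i` is never in `I_{z'}` because `G i ∩ R i = ∅`. -/
theorem DSA.altNext_inr (St : DSA Alph k) (z : St.Q) (c : Copy k) (a : Alph) :
    St.altNext (Sum.inr (z, c)) a =
      {x | ∃ c' ∈ St.Iset (St.next z a), x = Sum.inr (St.next z a, c')} := by
  ext x
  simp only [DSA.altNext, Set.mem_ofPred_eq]
  constructor
  · rintro ⟨c', rfl, hc', -⟩
    exact ⟨c', hc', rfl⟩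
  · rintro ⟨c', hc', rfl⟩
    refine ⟨c', rfl, hc', ?_⟩
    rintro ⟨i, rfl, hG, rfl⟩
    obtain ⟨j, hj, hR⟩ := hc'.resolve_left (Option.some_ne_none i)
    cases Option.some_inj.1 hj
    exact (St.disjGR i ▸ ⟨hG, hR⟩ : St.next z a ∈ (∅ : Set St.Q))

theorem DSA.inr_zeroCopy_mem_altNext_inr (St : DSA Alph k) (z : St.Q) (c : Copy k)
    (a : Alph) :
    (Sum.inr (St.next z a, none) : AltState St) ∈ St.altNext (Sum.inr (z, c)) a := by
  rw [DSA.altNext_inr]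
  exact ⟨none, Or.inl rfl, rfl⟩

section Copies

variable {M : FinMDP Alph} {St : DSA Alph k}

theorem gameValFrom_zeroCopy_le_inl (s : M.S) (q : St.Q) :
    gameValFrom M St s (Sum.inr (q, none)) ≤ gameValFrom M St s (Sum.inl q) := by
  refine gameValFrom_le_of_transport s _ _ (fun _ => Sum.inr (St.next q (M.label s), none))
    (fun _ _ => by simp [DSA.altNext]) fun π' _ =>
      ⟨fun p x => if x = Sum.inr (St.next (p.2.elim id Prod.fst) (M.label p.1), none) then 1
        else 0, ?_, fun c x => ?_⟩
  · rintro - ⟨s', _ | ⟨z, c⟩⟩ hp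
    · simp at hp
    · refine ⟨by simp, fun x hx => if_neg fun hx' => hx ?_⟩
      exact hx' ▸ St.inr_zeroCopy_mem_altNext_inr z c _
  · simp only [moveProb, headEntry, Sum.isLeft_inl, Sum.isLeft_inr, Sum.elim_inr, eq_comm]
    rfl

theorem gameValFrom_copy_le_zeroCopy (s : M.S) (q : St.Q) (i : Fin k) :
    gameValFrom M St s (Sum.inr (q, some i)) ≤ gameValFrom M St s (Sum.inr (q, none)) := by
  refine gameValFrom_le_of_transport s _ _ id (fun h => absurd h (by simp)) fun π' hπ' =>
    ⟨fun p => π' [] (if p.2 = Sum.inr (q, some i) then (p.1, Sum.inr (q, none)) else p), ?_,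
      fun c x => by simp [moveProb, headEntry]⟩
  intro _ p hp
  dsimp only
  split_ifs with hx
  · rw [hx, St.altNext_inr q (some i), ← St.altNext_inr q none]
    exact hπ' [] (p.1, _) rfl
  · exact hπ' [] p hp

end Copies

/-- In the stochastic Büchi game `M × A(S)`, for every MDP
state `s` and every automaton state `q` of the deterministic Streett automaton
`S`, the acceptance player's value satisfies
`val(s, q) ≥ val(s, (q, 0)) ≥ val(s, (q, i))` for every pair index `i`. -/
theorem gameVal_copies_le (Alph : Type) (k : ℕ) (St : DSA Alph k)
    (M : FinMDP Alph) (s : M.S) (q : St.Q) :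
    gameValFrom M St s (Sum.inr (q, (none : Copy k))) ≤
      gameValFrom M St s (Sum.inl q) ∧
    ∀ i : Fin k,
      gameValFrom M St s (Sum.inr (q, some i)) ≤
        gameValFrom M St s (Sum.inr (q, (none : Copy k))) :=
  ⟨gameValFrom_zeroCopy_le_inl s q, fun i => gameValFrom_copy_le_zeroCopy s q i⟩

end GFM
end
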